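/- arXiv:0707.1361 — 3 statements merged into one kernel-verified Lean document; each statement's English description precedes it below -/
import Mathlib

section
/- Let f_1, …, f_r (r ≥ 1) and g be nonzero polynomials in k[x] with f_1, …, f_r algebraically independent over k; set A = k[f_1,…,f_r], ω = df_1 ∧ ⋯ ∧ df_r, and let w ∈ Γ^n be such that deg_w h ≥ 0 for every nonzero h ∈ A, and deg_w g ≥ 0. Set M = deg_w(ω ∧ dg) − deg_w ω − deg_w g. If the ideal I(A^w, g^w) of A^w[y] is principal with generator P(A^w, g^w), then for every nonzero Φ ∈ A[y]: deg_w Φ(g) ≥ m_w^g(Φ) · ( deg_w^g P(A^w, g^w) + M ). -/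
/-!
Write `Ψ_t = ∂_y^t Φ` and `m = m_w^g(Φ)`. For `t < m` the value `Ψ_t(g)` has degree below
`deg_w^g Ψ_t`, which forces the leading form of `Ψ_t` to vanish at `g^w`; as long as this happens,
taking leading forms commutes with `∂_y` and lowers `deg_w^g` by exactly `deg_w g`. So the first
`m` derivatives of the leading form of `Φ`, a polynomial over `A^w`, vanish at `g^w`. The kernel
`(P)` is prime and `P` has positive degree, so in characteristic zero `P^m` divides this leading
form; the cofactor has coefficients in `A^w`, hence nonnegative degree, and so
`m · deg_w^g P ≤ deg_w^g Φ = deg_w Ψ_m(g) + m · deg_w g`.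

On the other side, the chain rule gives `ω ∧ dΨ_t(g) = Ψ_{t+1}(g) · ω ∧ dg` for `Ψ_t ∈ A[y]`,
while expanding `ω ∧ dh` along `dh` gives `deg_w(ω ∧ dh) ≤ deg_w ω + deg_w h`. Hence
`deg_w Ψ_{t+1}(g) + deg_w(ω ∧ dg) ≤ deg_w ω + deg_w Ψ_t(g)`; iterating `m` times and combining
with the first estimate gives the bound.
-/

open MvPolynomial Polynomial

set_option synthInstance.maxHeartbeats 1000000
set_option maxHeartbeats 1000000

variable {k : Type*} [Field k] [CharZero k] {n : ℕ}
variable {Γ : Type*} [AddCommGroup Γ] [LinearOrder Γ] [IsOrderedAddMonoid Γ]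

/-- The `w`-degree of a multivariate polynomial, with `wdeg w 0 = ⊥ = -∞`. -/
noncomputable def wdeg (w : Fin n → Γ) (f : MvPolynomial (Fin n) k) : WithBot Γ :=
  f.support.sup fun d => ((∑ i, d i • w i : Γ) : WithBot Γ)

/-- The leading `w`-homogeneous form `f^w` of `f`. -/
noncomputable def lform (w : Fin n → Γ) (f : MvPolynomial (Fin n) k) :
    MvPolynomial (Fin n) k :=
  letI : DecidableEq (WithBot Γ) := Classical.decEq _
  ∑ d ∈ f.support.filter
      (fun d => ((∑ i, d i • w i : Γ) : WithBot Γ) = wdeg w f),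
    MvPolynomial.monomial d (f.coeff d)

/-- `deg_w^g Φ = max_i deg_w (φ_i g^i)` for `Φ = Σ_i φ_i y^i`. -/
noncomputable def wdegG (w : Fin n → Γ) (g : MvPolynomial (Fin n) k)
    (Φ : Polynomial (MvPolynomial (Fin n) k)) : WithBot Γ :=
  Φ.support.sup fun i => wdeg w (Φ.coeff i * g ^ i)

/-- The leading form `Φ^{w,g}` of `Φ` for the grading in which `x_j` has weight `w_j`
and `y` has weight `deg_w g`: the sum of `φ_i^w y^i` over those `i` with
`deg_w (φ_i g^i) = deg_w^g Φ`. -/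
noncomputable def pLform (w : Fin n → Γ) (g : MvPolynomial (Fin n) k)
    (Φ : Polynomial (MvPolynomial (Fin n) k)) : Polynomial (MvPolynomial (Fin n) k) :=
  letI : DecidableEq (WithBot Γ) := Classical.decEq _
  ∑ i ∈ Φ.support.filter (fun i => wdeg w (Φ.coeff i * g ^ i) = wdegG w g Φ),
    Polynomial.C (lform w (Φ.coeff i)) * Polynomial.X ^ i

/-- `m_w^g(Φ) = min { i : deg_w^g (∂_y^i Φ) = deg_w ((∂_y^i Φ)(g)) }`. -/
noncomputable def mwg (w : Fin n → Γ) (g : MvPolynomial (Fin n) k)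
    (Φ : Polynomial (MvPolynomial (Fin n) k)) : ℕ :=
  sInf {i : ℕ |
    wdegG w g (Polynomial.derivative^[i] Φ) = wdeg w ((Polynomial.derivative^[i] Φ).eval g)}

/-- The `w`-degree of the differential form `dh_1 ∧ ⋯ ∧ dh_s`: the maximum over all
`s`-tuples of indices of the `w`-degree of the corresponding `s × s` Jacobian minor
plus the sum of the corresponding weights (noninjective tuples contribute `⊥`). -/
noncomputable def wedgeDeg (w : Fin n → Γ) {s : ℕ} (h : Fin s → MvPolynomial (Fin n) k) :
    WithBot Γ :=
  Finset.univ.sup fun e : Fin s → Fin n =>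
    wdeg w (Matrix.det (Matrix.of fun a b : Fin s => MvPolynomial.pderiv (e b) (h a)))
      + ((∑ b, w (e b) : Γ) : WithBot Γ)

/-- The initial algebra `A^w`: the `k`-subalgebra generated by `f^w` for `f ∈ A \ {0}`. -/
noncomputable def initAlg (w : Fin n → Γ) (A : Subalgebra k (MvPolynomial (Fin n) k)) :
    Subalgebra k (MvPolynomial (Fin n) k) :=
  Algebra.adjoin k (lform w '' ((A : Set (MvPolynomial (Fin n) k)) \ {0}))

/-- The field of fractions `K^w` of `A^w`, realized as a subfield of the fraction field
of `k[x]`. -/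
noncomputable def KW (w : Fin n → Γ) (A : Subalgebra k (MvPolynomial (Fin n) k)) :
    Subfield (FractionRing (MvPolynomial (Fin n) k)) :=
  Subfield.closure
    (algebraMap (MvPolynomial (Fin n) k) (FractionRing (MvPolynomial (Fin n) k)) ''
      (initAlg w A : Set (MvPolynomial (Fin n) k)))

/-- The field of fractions of a subalgebra `A` of `k[x]`, realized as a subfield of the
fraction field of `k[x]`. -/
noncomputable def fracSub (A : Subalgebra k (MvPolynomial (Fin n) k)) :
    Subfield (FractionRing (MvPolynomial (Fin n) k)) :=
  Subfield.closure
    (algebraMap (MvPolynomial (Fin n) k) (FractionRing (MvPolynomial (Fin n) k)) ''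
      (A : Set (MvPolynomial (Fin n) k)))

/-- A polynomial is `w`-homogeneous if all its monomials have the same `w`-degree. -/
def IsWHom (w : Fin n → Γ) (f : MvPolynomial (Fin n) k) : Prop :=
  ∃ γ : Γ, ∀ d ∈ f.support, (∑ i, d i • w i : Γ) = γ

section WeightedDegree

variable {k : Type*} [Field k] {Γ : Type*} [AddCommGroup Γ] [LinearOrder Γ]
  {w : Fin n → Γ} {f g h s : MvPolynomial (Fin n) k} {γ : Γ}

theorem wdeg_eq_weightedTotalDegree' (w : Fin n → Γ) (f : MvPolynomial (Fin n) k) :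
    wdeg w f = weightedTotalDegree' w f := by
  simp only [wdeg, weightedTotalDegree', Finsupp.weight_eq_sum]

@[simp]
theorem wdeg_eq_bot_iff : wdeg w f = ⊥ ↔ f = 0 := by
  rw [wdeg_eq_weightedTotalDegree', weightedTotalDegree'_eq_bot_iff]

@[simp]
theorem wdeg_zero : wdeg w (0 : MvPolynomial (Fin n) k) = ⊥ :=
  wdeg_eq_bot_iff.mpr rfl

theorem exists_wdeg_eq_coe (hf : f ≠ 0) : ∃ γ : Γ, wdeg w f = γ := by
  obtain ⟨γ, hγ⟩ := WithBot.ne_bot_iff_exists.mp (mt (wdeg_eq_bot_iff (w := w)).mp hf)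
  exact ⟨γ, hγ.symm⟩

theorem weight_le_wdeg {d : Fin n →₀ ℕ} (hd : d ∈ f.support) :
    (Finsupp.weight w d : WithBot Γ) ≤ wdeg w f := by
  rw [wdeg_eq_weightedTotalDegree']
  exact Finset.le_sup (f := fun d => (Finsupp.weight w d : WithBot Γ)) hd

theorem exists_weight_eq_wdeg (hf : f ≠ 0) :
    ∃ d ∈ f.support, wdeg w f = Finsupp.weight w d := by
  rw [wdeg_eq_weightedTotalDegree']
  exact Finset.exists_mem_eq_sup _ (support_nonempty.mpr hf) _

theorem wdeg_le_iff {B : WithBot Γ} :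
    wdeg w f ≤ B ↔ ∀ d ∈ f.support, (Finsupp.weight w d : WithBot Γ) ≤ B := by
  rw [wdeg_eq_weightedTotalDegree']
  exact Finset.sup_le_iff

theorem wdeg_lt_coe_iff : wdeg w f < γ ↔ ∀ d ∈ f.support, Finsupp.weight w d < γ := by
  rw [wdeg_eq_weightedTotalDegree', weightedTotalDegree', Finset.sup_lt_iff (WithBot.bot_lt_coe γ)]
  simp only [WithBot.coe_lt_coe]

theorem MvPolynomial.IsWeightedHomogeneous.wdeg_eq (hf : IsWeightedHomogeneous w f γ) (h0 : f ≠ 0) :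
    wdeg w f = γ := by
  rw [wdeg_eq_weightedTotalDegree']
  exact hf.weighted_total_degree h0

theorem wdeg_C {c : k} (hc : c ≠ 0) :
    wdeg w (MvPolynomial.C c : MvPolynomial (Fin n) k) = (0 : Γ) :=
  IsWeightedHomogeneous.wdeg_eq (isWeightedHomogeneous_C w c) (C_ne_zero.mpr hc)

theorem wdeg_one : wdeg w (1 : MvPolynomial (Fin n) k) = (0 : Γ) := by
  simpa using wdeg_C (w := w) (one_ne_zero (α := k))

theorem wdeg_neg (f : MvPolynomial (Fin n) k) : wdeg w (-f) = wdeg w f := by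
  simp only [wdeg, support_neg]

theorem wdeg_add_le (f g : MvPolynomial (Fin n) k) :
    wdeg w (f + g) ≤ max (wdeg w f) (wdeg w g) := by
  classical
  refine wdeg_le_iff.mpr fun d hd => ?_
  rcases Finset.mem_union.mp (support_add hd) with hd | hd
  · exact le_max_of_le_left (weight_le_wdeg hd)
  · exact le_max_of_le_right (weight_le_wdeg hd)

theorem wdeg_sum_le {ι : Type*} (S : Finset ι) (F : ι → MvPolynomial (Fin n) k) :
    wdeg w (∑ i ∈ S, F i) ≤ S.sup fun i => wdeg w (F i) := by
  classical
  induction S using Finset.cons_induction with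
  | empty => simp
  | cons a S ha ih =>
    rw [Finset.sum_cons, Finset.sup_cons]
    exact (wdeg_add_le _ _).trans (max_le_max le_rfl ih)

theorem wdeg_add_eq_of_lt (h : wdeg w s < wdeg w f) : wdeg w (f + s) = wdeg w f := by
  refine le_antisymm ((wdeg_add_le f s).trans (max_le le_rfl h.le)) ?_
  have key := wdeg_add_le (w := w) (f + s) (-s)
  rw [add_neg_cancel_right, wdeg_neg] at key
  exact (le_max_iff.mp key).resolve_right h.not_ge

theorem lform_eq_weightedHomogeneousComponent (hγ : wdeg w f = γ) :
    lform w f = weightedHomogeneousComponent w γ f := by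
  classical
  ext d
  rw [coeff_weightedHomogeneousComponent, lform, MvPolynomial.coeff_sum]
  simp only [MvPolynomial.coeff_monomial, Finset.sum_ite_eq', Finset.mem_filter,
    MvPolynomial.mem_support_iff, hγ, WithBot.coe_eq_coe, Finsupp.weight_eq_sum]
  split_ifs <;> tauto

theorem isWeightedHomogeneous_lform (hγ : wdeg w f = γ) :
    IsWeightedHomogeneous w (lform w f) γ := by
  rw [lform_eq_weightedHomogeneousComponent hγ]
  exact weightedHomogeneousComponent_isWeightedHomogeneous γ f

theorem lform_ne_zero (hf : f ≠ 0) : lform w f ≠ 0 := by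
  classical
  obtain ⟨d, hd, hdeg⟩ := exists_weight_eq_wdeg (w := w) hf
  rw [lform_eq_weightedHomogeneousComponent hdeg, ← MvPolynomial.support_nonempty]
  refine ⟨d, ?_⟩
  rwa [MvPolynomial.mem_support_iff, coeff_weightedHomogeneousComponent, if_pos rfl,
    ← MvPolynomial.mem_support_iff]

theorem wdeg_lform (hf : f ≠ 0) : wdeg w (lform w f) = wdeg w f := by
  obtain ⟨γ, hγ⟩ := exists_wdeg_eq_coe (w := w) hf
  rw [hγ, (isWeightedHomogeneous_lform hγ).wdeg_eq (lform_ne_zero hf)]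

theorem lform_eq_self (hh : IsWeightedHomogeneous w h γ) : lform w h = h := by
  rcases eq_or_ne h 0 with rfl | h0
  · simp [lform]
  rw [lform_eq_weightedHomogeneousComponent (hh.wdeg_eq h0), hh.weightedHomogeneousComponent_same]

theorem lform_C (c : k) : lform w (MvPolynomial.C c : MvPolynomial (Fin n) k) = MvPolynomial.C c :=
  lform_eq_self (isWeightedHomogeneous_C w c)

theorem wdeg_sub_lform_lt (hf : f ≠ 0) : wdeg w (f - lform w f) < wdeg w f := by
  classical
  obtain ⟨γ, hγ⟩ := exists_wdeg_eq_coe (w := w) hf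
  rw [hγ, wdeg_lt_coe_iff]
  intro d hd
  rw [MvPolynomial.mem_support_iff, coeff_sub, lform_eq_weightedHomogeneousComponent hγ,
    coeff_weightedHomogeneousComponent] at hd
  have hle : (Finsupp.weight w d : WithBot Γ) ≤ γ := by
    refine hγ ▸ weight_le_wdeg (MvPolynomial.mem_support_iff.mpr fun h0 => hd ?_)
    simp [h0]
  refine lt_of_le_of_ne (WithBot.coe_le_coe.mp hle) fun heq => hd ?_
  rw [if_pos heq, sub_self]

theorem lform_add_of_wdeg_lt (hh : IsWeightedHomogeneous w h γ) (h0 : h ≠ 0)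
    (hs : wdeg w s < γ) : lform w (h + s) = h := by
  have hdeg : wdeg w h = γ := hh.wdeg_eq h0
  rw [lform_eq_weightedHomogeneousComponent ((wdeg_add_eq_of_lt (hdeg ▸ hs)).trans hdeg),
    map_add, hh.weightedHomogeneousComponent_same, add_eq_left]
  exact weightedHomogeneousComponent_eq_zero' _ _ fun d hd =>
    (wdeg_lt_coe_iff.mp hs d hd).ne

variable [IsOrderedAddMonoid Γ]

theorem wdeg_mul_le (f g : MvPolynomial (Fin n) k) :
    wdeg w (f * g) ≤ wdeg w f + wdeg w g := by
  classical
  refine wdeg_le_iff.mpr fun d hd => ?_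
  obtain ⟨a, ha, b, hb, rfl⟩ := Finset.mem_add.mp (support_mul _ _ hd)
  rw [map_add, WithBot.coe_add]
  exact add_le_add (weight_le_wdeg ha) (weight_le_wdeg hb)

theorem wdeg_mul_sub_lform_mul_lt (hf : f ≠ 0) (hg : g ≠ 0) :
    wdeg w (f * g - lform w f * lform w g) < wdeg w f + wdeg w g := by
  have hsplit : f * g - lform w f * lform w g =
      lform w f * (g - lform w g) + (f - lform w f) * g := by ring
  rw [hsplit]
  refine (wdeg_add_le _ _).trans_lt (max_lt ?_ ?_)
  · refine (wdeg_mul_le _ _).trans_lt ?_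
    exact WithBot.add_lt_add_of_le_of_lt (mt wdeg_eq_bot_iff.mp (lform_ne_zero hf))
      (wdeg_lform hf).le (wdeg_sub_lform_lt hg)
  · refine (wdeg_mul_le _ _).trans_lt ?_
    exact WithBot.add_lt_add_of_lt_of_le (mt wdeg_eq_bot_iff.mp hg) (wdeg_sub_lform_lt hf) le_rfl

theorem lform_mul (hf : f ≠ 0) (hg : g ≠ 0) : lform w (f * g) = lform w f * lform w g := by
  obtain ⟨γ, hγ⟩ := exists_wdeg_eq_coe (w := w) hf
  obtain ⟨δ, hδ⟩ := exists_wdeg_eq_coe (w := w) hg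
  have key := wdeg_mul_sub_lform_mul_lt (w := w) hf hg
  rw [hγ, hδ, ← WithBot.coe_add] at key
  simpa using lform_add_of_wdeg_lt ((isWeightedHomogeneous_lform hγ).mul
    (isWeightedHomogeneous_lform hδ)) (mul_ne_zero (lform_ne_zero hf) (lform_ne_zero hg)) key

theorem wdeg_mul (f g : MvPolynomial (Fin n) k) : wdeg w (f * g) = wdeg w f + wdeg w g := by
  rcases eq_or_ne f 0 with rfl | hf
  · simp
  rcases eq_or_ne g 0 with rfl | hg
  · simp
  rw [← wdeg_lform (mul_ne_zero hf hg), lform_mul hf hg, ← wdeg_lform hf, ← wdeg_lform hg]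
  obtain ⟨γ, hγ⟩ := exists_wdeg_eq_coe (w := w) hf
  obtain ⟨δ, hδ⟩ := exists_wdeg_eq_coe (w := w) hg
  rw [((isWeightedHomogeneous_lform hγ).mul (isWeightedHomogeneous_lform hδ)).wdeg_eq
    (mul_ne_zero (lform_ne_zero hf) (lform_ne_zero hg)),
    (isWeightedHomogeneous_lform hγ).wdeg_eq (lform_ne_zero hf),
    (isWeightedHomogeneous_lform hδ).wdeg_eq (lform_ne_zero hg), WithBot.coe_add]

theorem wdeg_pow (f : MvPolynomial (Fin n) k) (i : ℕ) : wdeg w (f ^ i) = i • wdeg w f := by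
  induction i with
  | zero => simp [wdeg_one]
  | succ i ih => rw [pow_succ, wdeg_mul, ih, succ_nsmul]

theorem lform_pow (hf : f ≠ 0) (i : ℕ) : lform w (f ^ i) = lform w f ^ i := by
  induction i with
  | zero => simpa using lform_C (w := w) (1 : k)
  | succ i ih => rw [pow_succ, lform_mul (pow_ne_zero i hf) hf, ih, pow_succ]

theorem lform_mul_C (f : MvPolynomial (Fin n) k) (c : k) :
    lform w (f * MvPolynomial.C c) = lform w f * MvPolynomial.C c := by
  rcases eq_or_ne c 0 with rfl | hc
  · simp [lform]
  rcases eq_or_ne f 0 with rfl | hf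
  · simp [lform]
  rw [lform_mul hf (C_ne_zero.mpr hc), lform_C]

end WeightedDegree

section Wedge

variable {k : Type*} [Field k] {Γ : Type*} [AddCommGroup Γ] [LinearOrder Γ]
  {w : Fin n → Γ} {r : ℕ}

theorem wdeg_pderiv_add_le (i : Fin n) (h : MvPolynomial (Fin n) k) :
    wdeg w (pderiv i h) + w i ≤ wdeg w h := by
  rcases eq_or_ne (pderiv i h) 0 with h0 | h0
  · simp [h0]
  obtain ⟨d, hd, hdeg⟩ := exists_weight_eq_wdeg (w := w) h0
  have hmem : d + Finsupp.single i 1 ∈ h.support := by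
    rw [MvPolynomial.mem_support_iff, coeff_pderiv] at hd
    exact MvPolynomial.mem_support_iff.mpr (left_ne_zero_of_mul hd)
  calc wdeg w (pderiv i h) + w i = (Finsupp.weight w (d + Finsupp.single i 1) : WithBot Γ) := by
        rw [hdeg, map_add, Finsupp.weight_single, one_smul, WithBot.coe_add]
    _ ≤ wdeg w h := weight_le_wdeg hmem

noncomputable def jacobianMinor {s : ℕ} (e : Fin s → Fin n) (h : Fin s → MvPolynomial (Fin n) k) :
    Matrix (Fin s) (Fin s) (MvPolynomial (Fin n) k) :=
  Matrix.of fun a b => pderiv (e b) (h a)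

theorem wedgeDeg_eq_sup {s : ℕ} (h : Fin s → MvPolynomial (Fin n) k) :
    wedgeDeg w h = Finset.univ.sup fun e : Fin s → Fin n =>
      wdeg w (jacobianMinor e h).det + ((∑ b, w (e b) : Γ) : WithBot Γ) := rfl

variable [IsOrderedAddMonoid Γ]

theorem wdeg_neg_one_pow_mul (m : ℕ) (h : MvPolynomial (Fin n) k) :
    wdeg w ((-1) ^ m * h) = wdeg w h := by
  rw [wdeg_mul, wdeg_pow, wdeg_neg, wdeg_one, ← WithBot.coe_nsmul, smul_zero, WithBot.coe_zero,
    zero_add]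

theorem wdeg_sum_add_le {ι : Type*} (S : Finset ι) (F : ι → MvPolynomial (Fin n) k) (c : Γ)
    {B : WithBot Γ} (h : ∀ i ∈ S, wdeg w (F i) + c ≤ B) : wdeg w (∑ i ∈ S, F i) + c ≤ B :=
  calc wdeg w (∑ i ∈ S, F i) + c ≤ (S.sup fun i => wdeg w (F i)) + c :=
        add_le_add (wdeg_sum_le S F) le_rfl
    _ = S.sup fun i => wdeg w (F i) + c :=
        Finset.apply_sup_eq_sup_comp_of_linearOrder (· + (c : WithBot Γ))
          (fun _ _ hle => add_le_add hle le_rfl) (WithBot.bot_add _)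
    _ ≤ B := Finset.sup_le h

theorem wedgeDeg_snoc_le (f : Fin r → MvPolynomial (Fin n) k) (h : MvPolynomial (Fin n) k) :
    wedgeDeg w (Fin.snoc f h) ≤ wedgeDeg w f + wdeg w h := by
  rw [wedgeDeg_eq_sup]
  refine Finset.sup_le fun e _ => ?_
  rw [Matrix.det_succ_row _ (Fin.last r)]
  refine wdeg_sum_add_le _ _ _ fun j _ => ?_
  have hminor : (jacobianMinor e (Fin.snoc f h)).submatrix (Fin.last r).succAbove j.succAbove =
      jacobianMinor (e ∘ j.succAbove) f := by
    ext a b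
    simp [jacobianMinor]
  have hminor_le : wdeg w (jacobianMinor (e ∘ j.succAbove) f).det +
      ((∑ b, w (e (j.succAbove b)) : Γ) : WithBot Γ) ≤ wedgeDeg w f :=
    Finset.le_sup (f := fun e' : Fin r → Fin n =>
      wdeg w (jacobianMinor e' f).det + ((∑ b, w (e' b) : Γ) : WithBot Γ)) (Finset.mem_univ _)
  have hrow : jacobianMinor e (Fin.snoc f h) (Fin.last r) j = pderiv (e j) h := by
    simp [jacobianMinor]
  rw [hminor, hrow, mul_assoc, wdeg_neg_one_pow_mul, Fin.sum_univ_succAbove _ j, WithBot.coe_add,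
    add_comm (wedgeDeg w f)]
  calc wdeg w (pderiv (e j) h *
          (jacobianMinor (e ∘ j.succAbove) f).det) + (w (e j) + ∑ b, w (e (j.succAbove b)) : Γ)
      ≤ (wdeg w (pderiv (e j) h) + w (e j)) + (wdeg w (jacobianMinor (e ∘ j.succAbove) f).det +
          ((∑ b, w (e (j.succAbove b)) : Γ) : WithBot Γ)) := by
        rw [WithBot.coe_add, add_add_add_comm]
        exact add_le_add (wdeg_mul_le _ _) le_rfl
    _ ≤ wdeg w h + wedgeDeg w f := add_le_add (wdeg_pderiv_add_le _ _) hminor_le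

end Wedge

section Jacobian

variable {k : Type*} [Field k] {r : ℕ} {f : Fin r → MvPolynomial (Fin n) k}

theorem pderiv_mem_span_of_mem_adjoin {φ : MvPolynomial (Fin n) k}
    (hφ : φ ∈ Algebra.adjoin k (Set.range f)) :
    (fun j => pderiv j φ) ∈
      Submodule.span (MvPolynomial (Fin n) k) (Set.range fun a j => pderiv j (f a)) := by
  induction hφ using Algebra.adjoin_induction with
  | mem x hx =>
    obtain ⟨a, rfl⟩ := hx
    exact Submodule.subset_span ⟨a, rfl⟩
  | algebraMap c =>
    convert Submodule.zero_mem _ using 1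
    funext j
    simp [MvPolynomial.algebraMap_eq]
  | add x y _ _ hx hy =>
    convert Submodule.add_mem _ hx hy using 1
    funext j
    simp
  | mul x y _ _ hx hy =>
    convert Submodule.add_mem _ (Submodule.smul_mem _ y hx) (Submodule.smul_mem _ x hy) using 1
    funext j
    simp only [Derivation.leibniz, Pi.add_apply, Pi.smul_apply, smul_eq_mul]
    ring

theorem pderiv_eval_sub_mem_span {Φ : Polynomial (MvPolynomial (Fin n) k)}
    (hΦ : ∀ i, Φ.coeff i ∈ Algebra.adjoin k (Set.range f)) (g : MvPolynomial (Fin n) k) :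
    (fun j => pderiv j (Φ.eval g) - (derivative Φ).eval g * pderiv j g) ∈
      Submodule.span (MvPolynomial (Fin n) k) (Set.range fun a j => pderiv j (f a)) := by
  have hsum : (fun j => pderiv j (Φ.eval g) - (derivative Φ).eval g * pderiv j g) =
      ∑ i ∈ Φ.support, g ^ i • fun j => pderiv j (Φ.coeff i) := by
    funext j
    rw [Polynomial.derivative_eval, Polynomial.eval_eq_sum]
    simp only [Polynomial.sum_def, map_sum, Finset.sum_apply, Pi.smul_apply, smul_eq_mul,
      Finset.sum_mul, ← Finset.sum_sub_distrib, Derivation.leibniz, pderiv_pow]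
    refine Finset.sum_congr rfl fun i _ => ?_
    ring
  rw [hsum]
  exact Submodule.sum_mem _ fun i _ => Submodule.smul_mem _ _ (pderiv_mem_span_of_mem_adjoin (hΦ i))

theorem det_jacobianMinor_snoc_eval {Φ : Polynomial (MvPolynomial (Fin n) k)}
    (hΦ : ∀ i, Φ.coeff i ∈ Algebra.adjoin k (Set.range f)) (g : MvPolynomial (Fin n) k)
    (e : Fin (r + 1) → Fin n) :
    (jacobianMinor e (Fin.snoc f (Φ.eval g))).det =
      (derivative Φ).eval g * (jacobianMinor e (Fin.snoc f g)).det := by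
  obtain ⟨c, hc⟩ := (Submodule.mem_span_range_iff_exists_fun _).mp (pderiv_eval_sub_mem_span hΦ g)
  set c' : Fin (r + 1) → MvPolynomial (Fin n) k := Fin.snoc c ((derivative Φ).eval g)
  have hrows : jacobianMinor e (Fin.snoc f (Φ.eval g)) = (jacobianMinor e (Fin.snoc f g)).updateRow
      (Fin.last r) (∑ a, c' a • jacobianMinor e (Fin.snoc f g) a) := by
    ext a b
    induction a using Fin.lastCases with
    | last =>
      have := congrFun hc (e b)
      simp only [Finset.sum_apply, Pi.smul_apply, smul_eq_mul] at this
      simp [jacobianMinor, Fin.sum_univ_castSucc, c', this]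
    | cast a => simp [jacobianMinor]
  rw [hrows, Matrix.det_updateRow_sum]
  simp [c']

end Jacobian

theorem Polynomial.coeff_iterate_derivative_mem {R S : Type*} [Semiring R] [SetLike S R]
    [AddSubmonoidClass S R] {s : S} {Φ : R[X]} (hΦ : ∀ i, Φ.coeff i ∈ s) (t i : ℕ) :
    (derivative^[t] Φ).coeff i ∈ s := by
  rw [coeff_iterate_derivative]
  exact nsmul_mem (hΦ _) _

section WedgeChain

variable {k : Type*} [Field k] {Γ : Type*} [AddCommGroup Γ] [LinearOrder Γ] [IsOrderedAddMonoid Γ]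
  {w : Fin n → Γ} {r : ℕ} {f : Fin r → MvPolynomial (Fin n) k}
  {Φ : Polynomial (MvPolynomial (Fin n) k)}

theorem wedgeDeg_snoc_eval (hΦ : ∀ i, Φ.coeff i ∈ Algebra.adjoin k (Set.range f))
    (g : MvPolynomial (Fin n) k) :
    wedgeDeg w (Fin.snoc f (Φ.eval g)) =
      wdeg w ((derivative Φ).eval g) + wedgeDeg w (Fin.snoc f g) := by
  rw [wedgeDeg_eq_sup, wedgeDeg_eq_sup, Finset.apply_sup_eq_sup_comp_of_linearOrder
    (wdeg w ((derivative Φ).eval g) + ·) (fun _ _ hle => add_le_add le_rfl hle) (WithBot.add_bot _)]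
  refine Finset.sup_congr rfl fun e _ => ?_
  simp only [Function.comp, det_jacobianMinor_snoc_eval hΦ, wdeg_mul, add_assoc]

theorem wdeg_derivative_eval_add_wedgeDeg_le
    (hΦ : ∀ i, Φ.coeff i ∈ Algebra.adjoin k (Set.range f)) (g : MvPolynomial (Fin n) k) :
    wdeg w ((derivative Φ).eval g) + wedgeDeg w (Fin.snoc f g) ≤
      wedgeDeg w f + wdeg w (Φ.eval g) :=
  (wedgeDeg_snoc_eval hΦ g).symm.trans_le (wedgeDeg_snoc_le f _)

theorem wdeg_eval_iterate_derivative_add_le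
    (hΦ : ∀ i, Φ.coeff i ∈ Algebra.adjoin k (Set.range f)) (g : MvPolynomial (Fin n) k) (t : ℕ) :
    wdeg w ((derivative^[t] Φ).eval g) + t • wedgeDeg w (Fin.snoc f g) ≤
      t • wedgeDeg w f + wdeg w (Φ.eval g) := by
  induction t with
  | zero => simp
  | succ t ih =>
    have step := wdeg_derivative_eval_add_wedgeDeg_le (w := w)
      (Polynomial.coeff_iterate_derivative_mem hΦ t) g
    rw [← Function.iterate_succ_apply' derivative] at step
    calc wdeg w ((derivative^[t + 1] Φ).eval g) + (t + 1) • wedgeDeg w (Fin.snoc f g)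
        = (wdeg w ((derivative^[t + 1] Φ).eval g) + wedgeDeg w (Fin.snoc f g)) +
            t • wedgeDeg w (Fin.snoc f g) := by
          rw [succ_nsmul']; abel
      _ ≤ wedgeDeg w f + (wdeg w ((derivative^[t] Φ).eval g) + t • wedgeDeg w (Fin.snoc f g)) := by
          rw [← add_assoc]; exact add_le_add step le_rfl
      _ ≤ wedgeDeg w f + (t • wedgeDeg w f + wdeg w (Φ.eval g)) := add_le_add le_rfl ih
      _ = (t + 1) • wedgeDeg w f + wdeg w (Φ.eval g) := by rw [succ_nsmul']; abel

end WedgeChain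

section LeadingForm

variable {k : Type*} [Field k] {Γ : Type*} [AddCommGroup Γ] [LinearOrder Γ]
  {w : Fin n → Γ} {g : MvPolynomial (Fin n) k} {Φ : Polynomial (MvPolynomial (Fin n) k)} {i : ℕ}

noncomputable def leadingIndices (w : Fin n → Γ) (g : MvPolynomial (Fin n) k)
    (Φ : Polynomial (MvPolynomial (Fin n) k)) : Finset ℕ :=
  letI : DecidableEq (WithBot Γ) := Classical.decEq _
  Φ.support.filter fun i => wdeg w (Φ.coeff i * g ^ i) = wdegG w g Φ

theorem mem_leadingIndices :
    i ∈ leadingIndices w g Φ ↔ i ∈ Φ.support ∧ wdeg w (Φ.coeff i * g ^ i) = wdegG w g Φ := by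
  classical
  rw [leadingIndices, Finset.filter_congr_decidable, Finset.mem_filter]

theorem pLform_eq_sum : pLform w g Φ =
    ∑ i ∈ leadingIndices w g Φ, Polynomial.C (lform w (Φ.coeff i)) * Polynomial.X ^ i := rfl

theorem coeff_pLform (j : ℕ) : (pLform w g Φ).coeff j =
    if j ∈ leadingIndices w g Φ then lform w (Φ.coeff j) else 0 := by
  classical
  simp only [pLform_eq_sum, finsetSum_coeff, coeff_C_mul_X_pow, Finset.sum_ite_eq]

theorem wdeg_coeff_mul_pow_le_wdegG (Φ : Polynomial (MvPolynomial (Fin n) k)) (i : ℕ) :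
    wdeg w (Φ.coeff i * g ^ i) ≤ wdegG w g Φ := by
  by_cases hi : i ∈ Φ.support
  · exact Finset.le_sup (f := fun i => wdeg w (Φ.coeff i * g ^ i)) hi
  · simp [Polynomial.notMem_support_iff.mp hi]

theorem wdeg_eval_le_wdegG (Φ : Polynomial (MvPolynomial (Fin n) k)) :
    wdeg w (Φ.eval g) ≤ wdegG w g Φ := by
  rw [eval_eq_sum, Polynomial.sum_def]
  exact (wdeg_sum_le _ _).trans (Finset.sup_le fun i _ => wdeg_coeff_mul_pow_le_wdegG Φ i)

@[simp]
theorem wdegG_zero : wdegG w g (0 : Polynomial (MvPolynomial (Fin n) k)) = ⊥ := by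
  simp [wdegG]

theorem leadingIndices_nonempty (hΦ : Φ ≠ 0) : (leadingIndices w g Φ).Nonempty := by
  obtain ⟨i, hi, heq⟩ := Finset.exists_mem_eq_sup _ (support_nonempty.mpr hΦ)
    fun i => wdeg w (Φ.coeff i * g ^ i)
  exact ⟨i, mem_leadingIndices.mpr ⟨hi, heq.symm⟩⟩

theorem exists_wdegG_eq_coe (hg : g ≠ 0) (hΦ : Φ ≠ 0) : ∃ γ : Γ, wdegG w g Φ = γ := by
  obtain ⟨i, hi⟩ := leadingIndices_nonempty (w := w) (g := g) hΦ
  obtain ⟨hsupp, hi⟩ := mem_leadingIndices.mp hi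
  rw [← hi]
  exact exists_wdeg_eq_coe (mul_ne_zero (Polynomial.mem_support_iff.mp hsupp) (pow_ne_zero i hg))

theorem pLform_ne_zero (hΦ : Φ ≠ 0) : pLform w g Φ ≠ 0 := by
  obtain ⟨i, hi⟩ := leadingIndices_nonempty (w := w) (g := g) hΦ
  refine fun h0 => lform_ne_zero (w := w)
    (Polynomial.mem_support_iff.mp (mem_leadingIndices.mp hi).1) ?_
  simpa [coeff_pLform, hi] using congrArg (Polynomial.coeff · i) h0

theorem wdegG_ne_bot (hg : g ≠ 0) (hΦ : Φ ≠ 0) : wdegG w g Φ ≠ ⊥ := by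
  obtain ⟨γ, hγ⟩ := exists_wdegG_eq_coe (w := w) hg hΦ
  exact hγ ▸ WithBot.coe_ne_bot

variable [IsOrderedAddMonoid Γ]

theorem wdeg_lform_coeff_mul_pow (hi : i ∈ leadingIndices w g Φ) :
    wdeg w (lform w (Φ.coeff i) * g ^ i) = wdegG w g Φ := by
  obtain ⟨hsupp, hi⟩ := mem_leadingIndices.mp hi
  rw [wdeg_mul, wdeg_lform (Polynomial.mem_support_iff.mp hsupp), ← wdeg_mul, hi]

theorem wdegG_pLform : wdegG w g (pLform w g Φ) = wdegG w g Φ := by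
  rcases eq_or_ne Φ 0 with rfl | hΦ
  · simp [pLform]
  have hsupp : (pLform w g Φ).support = leadingIndices w g Φ := by
    ext j
    rw [Polynomial.mem_support_iff, coeff_pLform]
    split_ifs with hj
    · exact iff_of_true (lform_ne_zero (Polynomial.mem_support_iff.mp
        (mem_leadingIndices.mp hj).1)) hj
    · exact iff_of_false (not_not.mpr rfl) hj
  rw [wdegG, hsupp]
  refine (Finset.sup_congr rfl fun j hj => ?_).trans
    (Finset.sup_const (leadingIndices_nonempty hΦ) _)
  rw [coeff_pLform, if_pos hj, wdeg_lform_coeff_mul_pow hj]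

theorem eval_lform_pLform (hg : g ≠ 0) : (pLform w g Φ).eval (lform w g) =
    ∑ i ∈ leadingIndices w g Φ, lform w (Φ.coeff i * g ^ i) := by
  rw [pLform_eq_sum, eval_finsetSum]
  refine Finset.sum_congr rfl fun i hi => ?_
  rw [Polynomial.eval_mul, Polynomial.eval_C, Polynomial.eval_pow, Polynomial.eval_X,
    lform_mul (Polynomial.mem_support_iff.mp (mem_leadingIndices.mp hi).1) (pow_ne_zero i hg),
    lform_pow hg]

theorem isWeightedHomogeneous_eval_lform_pLform (hg : g ≠ 0) {γ : Γ} (hγ : wdegG w g Φ = γ) :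
    IsWeightedHomogeneous w ((pLform w g Φ).eval (lform w g)) γ := by
  rw [eval_lform_pLform hg]
  refine IsWeightedHomogeneous.sum _ _ _ fun i hi => isWeightedHomogeneous_lform ?_
  rw [(mem_leadingIndices.mp hi).2, hγ]

theorem wdeg_eval_sub_eval_lform_pLform_lt (hg : g ≠ 0) (hΦ : Φ ≠ 0) :
    wdeg w (Φ.eval g - (pLform w g Φ).eval (lform w g)) < wdegG w g Φ := by
  classical
  obtain ⟨γ, hγ⟩ := exists_wdegG_eq_coe (w := w) hg hΦ
  have hsplit : Φ.eval g - (pLform w g Φ).eval (lform w g) = ∑ i ∈ Φ.support,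
      (Φ.coeff i * g ^ i -
        if i ∈ leadingIndices w g Φ then lform w (Φ.coeff i * g ^ i) else 0) := by
    rw [eval_lform_pLform hg, Finset.sum_sub_distrib, Finset.sum_ite_mem,
      Finset.inter_eq_right.mpr fun i hi => (mem_leadingIndices.mp hi).1,
      eval_eq_sum, Polynomial.sum_def]
  rw [hsplit, hγ]
  refine (wdeg_sum_le _ _).trans_lt ((Finset.sup_lt_iff (WithBot.bot_lt_coe γ)).mpr fun i hi => ?_)
  split_ifs with hL
  · rw [← hγ, ← (mem_leadingIndices.mp hL).2]
    exact wdeg_sub_lform_lt (mul_ne_zero (Polynomial.mem_support_iff.mp hi) (pow_ne_zero i hg))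
  · rw [sub_zero, ← hγ]
    exact lt_of_le_of_ne (wdeg_coeff_mul_pow_le_wdegG Φ i) fun h =>
      hL (mem_leadingIndices.mpr ⟨hi, h⟩)

theorem eval_lform_pLform_eq_zero (hg : g ≠ 0) (hlt : wdeg w (Φ.eval g) < wdegG w g Φ) :
    (pLform w g Φ).eval (lform w g) = 0 := by
  have hΦ : Φ ≠ 0 := by
    rintro rfl
    simp at hlt
  obtain ⟨γ, hγ⟩ := exists_wdegG_eq_coe (w := w) hg hΦ
  by_contra h0
  have hdeg := (isWeightedHomogeneous_eval_lform_pLform hg hγ).wdeg_eq h0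
  set S := (pLform w g Φ).eval (lform w g)
  have hle := wdeg_add_le (w := w) (Φ.eval g) (-(Φ.eval g - S))
  rw [show Φ.eval g + -(Φ.eval g - S) = S by ring, wdeg_neg, hdeg, ← hγ] at hle
  exact hle.not_gt (max_lt hlt (wdeg_eval_sub_eval_lform_pLform_lt hg hΦ))

theorem exists_pos_mem_leadingIndices (hg : g ≠ 0)
    (hlt : wdeg w (Φ.eval g) < wdegG w g Φ) : ∃ i ∈ leadingIndices w g Φ, 0 < i := by
  by_contra! hzero
  have hΦ : Φ ≠ 0 := by
    rintro rfl
    simp at hlt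
  obtain ⟨i, hi⟩ := leadingIndices_nonempty (w := w) (g := g) hΦ
  obtain rfl : i = 0 := Nat.le_zero.mp (hzero i hi)
  have h0 := eval_lform_pLform_eq_zero hg hlt
  rw [eval_lform_pLform hg, Finset.sum_eq_single_of_mem 0 hi
    fun j hj hj0 => absurd (Nat.le_zero.mp (hzero j hj)) hj0, pow_zero, mul_one] at h0
  exact lform_ne_zero (Polynomial.mem_support_iff.mp (mem_leadingIndices.mp hi).1) h0

end LeadingForm

section LeadingFormDerivative

variable {k : Type*} [Field k] {Γ : Type*} [AddCommGroup Γ] [LinearOrder Γ]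
  [IsOrderedAddMonoid Γ] {w : Fin n → Γ} {g : MvPolynomial (Fin n) k}
  {Φ : Polynomial (MvPolynomial (Fin n) k)}

theorem coeff_derivative_eq_mul_C (Φ : Polynomial (MvPolynomial (Fin n) k)) (i : ℕ) :
    (derivative Φ).coeff i = Φ.coeff (i + 1) * MvPolynomial.C ((i : k) + 1) := by
  simp [coeff_derivative]

variable [CharZero k]

theorem wdeg_coeff_derivative_mul_pow_add (i : ℕ) :
    wdeg w ((derivative Φ).coeff i * g ^ i) + wdeg w g =
      wdeg w (Φ.coeff (i + 1) * g ^ (i + 1)) := by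
  rw [coeff_derivative_eq_mul_C, wdeg_mul, wdeg_mul, wdeg_C (Nat.cast_add_one_ne_zero i),
    wdeg_mul, wdeg_pow, wdeg_pow, succ_nsmul, WithBot.coe_zero, add_zero, add_assoc]

theorem wdegG_derivative_add (hpos : ∃ i ∈ leadingIndices w g Φ, 0 < i) :
    wdegG w g (derivative Φ) + wdeg w g = wdegG w g Φ := by
  refine le_antisymm ?_ ?_
  · rw [wdegG, Finset.apply_sup_eq_sup_comp_of_linearOrder (· + wdeg w g)
      (fun _ _ hle => add_le_add hle le_rfl) (WithBot.bot_add _)]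
    exact Finset.sup_le fun j _ =>
      (wdeg_coeff_derivative_mul_pow_add j).trans_le (wdeg_coeff_mul_pow_le_wdegG Φ (j + 1))
  · obtain ⟨i, hi, hipos⟩ := hpos
    obtain ⟨j, rfl⟩ := Nat.exists_eq_add_of_le' hipos
    rw [← (mem_leadingIndices.mp hi).2, ← wdeg_coeff_derivative_mul_pow_add]
    exact add_le_add (wdeg_coeff_mul_pow_le_wdegG _ j) le_rfl

theorem mem_leadingIndices_derivative_iff (hg : g ≠ 0) (hpos : ∃ i ∈ leadingIndices w g Φ, 0 < i)
    {j : ℕ} : j ∈ leadingIndices w g (derivative Φ) ↔ j + 1 ∈ leadingIndices w g Φ := by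
  have hcancel : ∀ a b : WithBot Γ, a = b ↔ a + wdeg w g = b + wdeg w g := fun a b =>
    ⟨congrArg (· + wdeg w g), WithBot.add_right_cancel (mt wdeg_eq_bot_iff.mp hg)⟩
  rw [mem_leadingIndices, mem_leadingIndices, Polynomial.mem_support_iff,
    Polynomial.mem_support_iff, hcancel, wdeg_coeff_derivative_mul_pow_add,
    wdegG_derivative_add hpos, coeff_derivative_eq_mul_C]
  simp [Nat.cast_add_one_ne_zero]

theorem pLform_derivative (hg : g ≠ 0) (hpos : ∃ i ∈ leadingIndices w g Φ, 0 < i) :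
    pLform w g (derivative Φ) = derivative (pLform w g Φ) := by
  ext j : 1
  rw [coeff_derivative_eq_mul_C, coeff_pLform, coeff_pLform, coeff_derivative_eq_mul_C]
  by_cases hj : j + 1 ∈ leadingIndices w g Φ
  · rw [if_pos ((mem_leadingIndices_derivative_iff hg hpos).mpr hj), if_pos hj, lform_mul_C]
  · rw [if_neg (mt (mem_leadingIndices_derivative_iff hg hpos).mp hj), if_neg hj, zero_mul]

theorem pLform_iterate_derivative (hg : g ≠ 0) {t : ℕ}
    (hlt : ∀ s < t, wdeg w ((derivative^[s] Φ).eval g) < wdegG w g (derivative^[s] Φ)) :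
    wdegG w g (derivative^[t] Φ) + t • wdeg w g = wdegG w g Φ ∧
      pLform w g (derivative^[t] Φ) = derivative^[t] (pLform w g Φ) := by
  induction t with
  | zero => simp
  | succ t ih =>
    obtain ⟨hdeg, hform⟩ := ih fun s hs => hlt s (hs.trans t.lt_succ_self)
    have hpos := exists_pos_mem_leadingIndices hg (hlt t t.lt_succ_self)
    rw [Function.iterate_succ_apply', Function.iterate_succ_apply', succ_nsmul', ← add_assoc,
      wdegG_derivative_add hpos, pLform_derivative hg hpos, hform]
    exact ⟨hdeg, rfl⟩

end LeadingFormDerivative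

section Multiplicity

variable {k : Type*} [Field k] {Γ : Type*} [AddCommGroup Γ] [LinearOrder Γ]
  {w : Fin n → Γ} {g : MvPolynomial (Fin n) k} {Φ : Polynomial (MvPolynomial (Fin n) k)}

theorem wdeg_eval_iterate_derivative_mwg :
    wdeg w ((derivative^[mwg w g Φ] Φ).eval g) = wdegG w g (derivative^[mwg w g Φ] Φ) :=
  (Nat.sInf_mem (⟨Φ.natDegree + 1, by simp [iterate_derivative_eq_zero (Nat.lt_succ_self _)]⟩ :
    {i : ℕ | wdegG w g (derivative^[i] Φ) = wdeg w ((derivative^[i] Φ).eval g)}.Nonempty)).symm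

theorem wdeg_eval_iterate_derivative_lt_of_lt_mwg {t : ℕ} (ht : t < mwg w g Φ) :
    wdeg w ((derivative^[t] Φ).eval g) < wdegG w g (derivative^[t] Φ) :=
  lt_of_le_of_ne (wdeg_eval_le_wdegG _) fun h => Nat.notMem_of_lt_sInf ht h.symm

variable [CharZero k] [IsOrderedAddMonoid Γ]

theorem wdeg_eval_iterate_derivative_mwg_add (hg : g ≠ 0) :
    wdeg w ((derivative^[mwg w g Φ] Φ).eval g) + mwg w g Φ • wdeg w g = wdegG w g Φ := by
  rw [wdeg_eval_iterate_derivative_mwg]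
  exact (pLform_iterate_derivative hg fun _ => wdeg_eval_iterate_derivative_lt_of_lt_mwg).1

theorem eval_lform_iterate_derivative_pLform_eq_zero (hg : g ≠ 0) {t : ℕ} (ht : t < mwg w g Φ) :
    (derivative^[t] (pLform w g Φ)).eval (lform w g) = 0 := by
  rw [← (pLform_iterate_derivative hg fun s hs =>
    wdeg_eval_iterate_derivative_lt_of_lt_mwg (hs.trans ht)).2]
  exact eval_lform_pLform_eq_zero hg (wdeg_eval_iterate_derivative_lt_of_lt_mwg ht)

end Multiplicity

section LeadingFormMul

variable {k : Type*} [Field k] {Γ : Type*} [AddCommGroup Γ] [LinearOrder Γ]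
  {w : Fin n → Γ} {g : MvPolynomial (Fin n) k} {Φ Ψ : Polynomial (MvPolynomial (Fin n) k)}

theorem wdeg_coeff_mul_pow_lt_of_max'_lt (hg : g ≠ 0) (hΦ : Φ ≠ 0) {i : ℕ}
    (hi : (leadingIndices w g Φ).max' (leadingIndices_nonempty hΦ) < i) :
    wdeg w (Φ.coeff i * g ^ i) < wdegG w g Φ := by
  refine lt_of_le_of_ne (wdeg_coeff_mul_pow_le_wdegG Φ i) fun h =>
    hi.not_ge (Finset.le_max' _ i (mem_leadingIndices.mpr ⟨?_, h⟩))
  by_contra hns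
  rw [Polynomial.notMem_support_iff.mp hns, zero_mul, wdeg_zero] at h
  exact wdegG_ne_bot hg hΦ h.symm

variable [IsOrderedAddMonoid Γ]

theorem wdeg_coeff_mul_coeff_mul_pow (Φ Ψ : Polynomial (MvPolynomial (Fin n) k)) (i j : ℕ) :
    wdeg w (Φ.coeff i * Ψ.coeff j * g ^ (i + j)) =
      wdeg w (Φ.coeff i * g ^ i) + wdeg w (Ψ.coeff j * g ^ j) := by
  rw [← wdeg_mul, pow_add]
  ring_nf

theorem wdegG_mul_le (Φ Ψ : Polynomial (MvPolynomial (Fin n) k)) :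
    wdegG w g (Φ * Ψ) ≤ wdegG w g Φ + wdegG w g Ψ := by
  refine Finset.sup_le fun N _ => ?_
  rw [Polynomial.coeff_mul, Finset.sum_mul]
  refine (wdeg_sum_le _ _).trans (Finset.sup_le fun p hp => ?_)
  rw [← Finset.HasAntidiagonal.mem_antidiagonal.mp hp, wdeg_coeff_mul_coeff_mul_pow]
  exact add_le_add (wdeg_coeff_mul_pow_le_wdegG Φ _) (wdeg_coeff_mul_pow_le_wdegG Ψ _)

theorem wdeg_coeff_mul_coeff_mul_pow_lt {i₀ j₀ : ℕ}
    (hi₀ : ∀ i, i₀ < i → wdeg w (Φ.coeff i * g ^ i) < wdegG w g Φ)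
    (hj₀ : ∀ j, j₀ < j → wdeg w (Ψ.coeff j * g ^ j) < wdegG w g Ψ)
    (hΦ : wdegG w g Φ ≠ ⊥) (hΨ : wdegG w g Ψ ≠ ⊥) {p : ℕ × ℕ} (hp : p.1 + p.2 = i₀ + j₀)
    (hne : p ≠ (i₀, j₀)) :
    wdeg w (Φ.coeff p.1 * Ψ.coeff p.2 * g ^ (p.1 + p.2)) < wdegG w g Φ + wdegG w g Ψ := by
  rw [wdeg_coeff_mul_coeff_mul_pow]
  rcases lt_or_ge i₀ p.1 with h1 | h1
  · exact (add_le_add le_rfl (wdeg_coeff_mul_pow_le_wdegG Ψ _)).trans_lt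
      (WithBot.add_lt_add_right hΨ (hi₀ _ h1))
  · have h2 : j₀ < p.2 := by
      by_contra! h2
      exact hne (Prod.ext (by omega) (by omega))
    exact (add_le_add (wdeg_coeff_mul_pow_le_wdegG Φ _) le_rfl).trans_lt
      (WithBot.add_lt_add_left hΦ (hj₀ _ h2))

theorem wdegG_mul (hg : g ≠ 0) (Φ Ψ : Polynomial (MvPolynomial (Fin n) k)) :
    wdegG w g (Φ * Ψ) = wdegG w g Φ + wdegG w g Ψ := by
  rcases eq_or_ne Φ 0 with rfl | hΦ
  · simp
  rcases eq_or_ne Ψ 0 with rfl | hΨ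
  · simp
  refine le_antisymm (wdegG_mul_le Φ Ψ) ?_
  set i₀ := (leadingIndices w g Φ).max' (leadingIndices_nonempty hΦ)
  set j₀ := (leadingIndices w g Ψ).max' (leadingIndices_nonempty hΨ)
  have hi₀ := mem_leadingIndices.mp ((leadingIndices w g Φ).max'_mem (leadingIndices_nonempty hΦ))
  have hj₀ := mem_leadingIndices.mp ((leadingIndices w g Ψ).max'_mem (leadingIndices_nonempty hΨ))
  have hsplit : (Φ * Ψ).coeff (i₀ + j₀) * g ^ (i₀ + j₀) =
      Φ.coeff i₀ * Ψ.coeff j₀ * g ^ (i₀ + j₀) +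
        ∑ p ∈ (Finset.HasAntidiagonal.antidiagonal (i₀ + j₀)).erase (i₀, j₀),
        Φ.coeff p.1 * Ψ.coeff p.2 * g ^ (i₀ + j₀) := by
    rw [Polynomial.coeff_mul, Finset.sum_mul, ← Finset.add_sum_erase _ _
      (Finset.HasAntidiagonal.mem_antidiagonal.mpr (rfl : (i₀, j₀).1 + (i₀, j₀).2 = i₀ + j₀))]
  have hlead : wdeg w (Φ.coeff i₀ * Ψ.coeff j₀ * g ^ (i₀ + j₀)) = wdegG w g Φ + wdegG w g Ψ := by
    rw [wdeg_coeff_mul_coeff_mul_pow, hi₀.2, hj₀.2]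
  have hrest : wdeg w (∑ p ∈ (Finset.HasAntidiagonal.antidiagonal (i₀ + j₀)).erase (i₀, j₀),
      Φ.coeff p.1 * Ψ.coeff p.2 * g ^ (i₀ + j₀)) < wdegG w g Φ + wdegG w g Ψ := by
    refine (wdeg_sum_le _ _).trans_lt ((Finset.sup_lt_iff (bot_lt_iff_ne_bot.mpr
      (WithBot.add_ne_bot.mpr ⟨wdegG_ne_bot hg hΦ, wdegG_ne_bot hg hΨ⟩))).mpr fun p hp => ?_)
    obtain ⟨hne, hp⟩ := Finset.mem_erase.mp hp
    rw [← Finset.HasAntidiagonal.mem_antidiagonal.mp hp]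
    exact wdeg_coeff_mul_coeff_mul_pow_lt (fun i hi => wdeg_coeff_mul_pow_lt_of_max'_lt hg hΦ hi)
      (fun j hj => wdeg_coeff_mul_pow_lt_of_max'_lt hg hΨ hj) (wdegG_ne_bot hg hΦ)
      (wdegG_ne_bot hg hΨ) (Finset.HasAntidiagonal.mem_antidiagonal.mp hp) hne
  calc wdegG w g Φ + wdegG w g Ψ = wdeg w ((Φ * Ψ).coeff (i₀ + j₀) * g ^ (i₀ + j₀)) := by
        rw [hsplit, wdeg_add_eq_of_lt (hlead ▸ hrest), hlead]
    _ ≤ wdegG w g (Φ * Ψ) := wdeg_coeff_mul_pow_le_wdegG _ _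

theorem wdegG_pow (hg : g ≠ 0) (Φ : Polynomial (MvPolynomial (Fin n) k)) (m : ℕ) :
    wdegG w g (Φ ^ m) = m • wdegG w g Φ := by
  induction m with
  | zero =>
    rw [pow_zero, zero_smul, ← Polynomial.C_1, wdegG, Polynomial.support_C one_ne_zero]
    simp [wdeg_one]
  | succ m ih => rw [pow_succ, wdegG_mul hg, ih, succ_nsmul]

theorem zero_le_wdegG (hΦ : Φ ≠ 0) (hg : (0 : Γ) ≤ wdeg w g)
    (hcoeff : ∀ i, Φ.coeff i ≠ 0 → (0 : Γ) ≤ wdeg w (Φ.coeff i)) : (0 : Γ) ≤ wdegG w g Φ := by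
  obtain ⟨i, hi⟩ := support_nonempty.mpr hΦ
  refine le_trans ?_ (wdeg_coeff_mul_pow_le_wdegG Φ i)
  rw [wdeg_mul, wdeg_pow, ← add_zero ((0 : Γ) : WithBot Γ)]
  exact add_le_add (hcoeff i (Polynomial.mem_support_iff.mp hi)) (nsmul_nonneg hg i)

end LeadingFormMul

section PrimeMultiplicity

variable {R : Type*} [CommRing R] [IsDomain R] [CharZero R] {P Θ : R[X]}

theorem Polynomial.not_dvd_C_mul_derivative (hdeg : 0 < P.natDegree) {c : R}
    (hc : c ≠ 0) : ¬ P ∣ Polynomial.C c * derivative P := by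
  intro hdvd
  have hne : Polynomial.C c * derivative P ≠ 0 :=
    mul_ne_zero (C_ne_zero.mpr hc) (derivative_ne_zero.mpr hdeg.ne')
  have hle := natDegree_le_of_dvd hdvd hne
  rw [natDegree_C_mul hc] at hle
  exact (natDegree_derivative_lt hdeg.ne').not_ge hle

theorem Prime.dvd_of_pow_succ_dvd_derivative (hP : Prime P) (hdeg : 0 < P.natDegree) {j : ℕ}
    {Q : R[X]} (h : P ^ (j + 1) ∣ derivative (P ^ (j + 1) * Q)) : P ∣ Q := by
  have hsplit : derivative (P ^ (j + 1) * Q) =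
      P ^ j * (Polynomial.C ((j : R) + 1) * derivative P * Q) + P ^ (j + 1) * derivative Q := by
    rw [derivative_mul, derivative_pow_succ]
    ring
  rw [hsplit, dvd_add_left (dvd_mul_right _ _), pow_succ,
    mul_dvd_mul_iff_left (pow_ne_zero j hP.ne_zero)] at h
  exact (hP.dvd_or_dvd h).resolve_left
    (not_dvd_C_mul_derivative hdeg (Nat.cast_add_one_ne_zero j))

theorem Prime.pow_succ_dvd_of_pow_dvd_derivative (hP : Prime P) (hdeg : 0 < P.natDegree)
    (hΘ : P ∣ Θ) {j : ℕ} (h : P ^ j ∣ derivative Θ) : P ^ (j + 1) ∣ Θ := by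
  induction j with
  | zero => simpa using hΘ
  | succ j ih =>
    obtain ⟨Q, rfl⟩ := ih ((pow_dvd_pow P j.le_succ).trans h)
    obtain ⟨Q', rfl⟩ := hP.dvd_of_pow_succ_dvd_derivative hdeg h
    exact ⟨Q', by ring⟩

theorem Prime.pow_dvd_of_dvd_iterate_derivative (hP : Prime P) (hdeg : 0 < P.natDegree)
    {m : ℕ} (h : ∀ t < m, P ∣ derivative^[t] Θ) : P ^ m ∣ Θ := by
  induction m generalizing Θ with
  | zero => simp
  | succ m ih =>
    refine hP.pow_succ_dvd_of_pow_dvd_derivative hdeg (h 0 m.succ_pos) (ih fun t ht => ?_)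
    simpa using h (t + 1) (by omega)

theorem pow_dvd_of_aeval_iterate_derivative_eq_zero {B : Type*} [CommRing B] [IsDomain B]
    [Algebra R B] (hinj : Function.Injective (algebraMap R B)) {x : B}
    (hP : RingHom.ker (aeval x : R[X] →ₐ[R] B) = Ideal.span {P}) {m : ℕ}
    (h : ∀ t < m, aeval x (derivative^[t] Θ) = 0) : P ^ m ∣ Θ := by
  have hdvd : ∀ t < m, P ∣ derivative^[t] Θ := fun t ht => by
    rw [← Ideal.mem_span_singleton, ← hP, RingHom.mem_ker]
    exact h t ht
  rcases eq_or_ne P 0 with rfl | hP0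
  · cases m with
    | zero => simp
    | succ m => simpa using hdvd 0 m.succ_pos
  have hprime : Prime P :=
    (Ideal.span_singleton_prime hP0).mp (hP ▸ RingHom.ker_isPrime _)
  have hdeg : 0 < P.natDegree := by
    refine Nat.pos_of_ne_zero fun h0 => hP0 ?_
    have hPx : aeval x P = 0 := by
      rw [← RingHom.mem_ker, hP]
      exact Ideal.mem_span_singleton_self P
    rw [eq_C_of_natDegree_eq_zero h0, Polynomial.aeval_C, ← map_zero (algebraMap R B)] at hPx
    rw [eq_C_of_natDegree_eq_zero h0, hinj hPx, map_zero]
  exact hprime.pow_dvd_of_dvd_iterate_derivative hdeg hdvd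

end PrimeMultiplicity

section InitialAlgebra

variable {k : Type*} [Field k] {Γ : Type*} [AddCommGroup Γ] [LinearOrder Γ]
  {w : Fin n → Γ} {A : Subalgebra k (MvPolynomial (Fin n) k)}

theorem lform_mem_initAlg {φ : MvPolynomial (Fin n) k} (hφA : φ ∈ A) (hφ : φ ≠ 0) :
    lform w φ ∈ initAlg w A :=
  Algebra.subset_adjoin ⟨φ, ⟨hφA, hφ⟩, rfl⟩

theorem pLform_mem_lifts {g : MvPolynomial (Fin n) k} {Φ : Polynomial (MvPolynomial (Fin n) k)}
    (hΦA : ∀ i, Φ.coeff i ∈ A) :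
    pLform w g Φ ∈ lifts (algebraMap (initAlg w A) (MvPolynomial (Fin n) k)) := by
  refine (lifts_iff_coeff_lifts _).mpr fun i => ?_
  rw [coeff_pLform]
  split_ifs with hi
  · exact ⟨⟨_, lform_mem_initAlg (hΦA i) (Polynomial.mem_support_iff.mp
      (mem_leadingIndices.mp hi).1)⟩, rfl⟩
  · exact ⟨0, map_zero _⟩

variable [IsOrderedAddMonoid Γ]

theorem zero_le_weight_of_mem_initAlg
    (hw : ∀ h ∈ A, h ≠ 0 → ((0 : Γ) : WithBot Γ) ≤ wdeg w h) {h : MvPolynomial (Fin n) k}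
    (hh : h ∈ initAlg w A) : ∀ d ∈ h.support, 0 ≤ Finsupp.weight w d := by
  induction hh using Algebra.adjoin_induction with
  | mem x hx =>
    obtain ⟨φ, ⟨hφA, hφ⟩, rfl⟩ := hx
    obtain ⟨γ, hγ⟩ := exists_wdeg_eq_coe (w := w) hφ
    intro d hd
    rw [isWeightedHomogeneous_lform hγ (MvPolynomial.mem_support_iff.mp hd)]
    exact WithBot.coe_le_coe.mp (hγ ▸ hw φ hφA hφ)
  | algebraMap c =>
    intro d hd
    rw [isWeightedHomogeneous_C w c (MvPolynomial.mem_support_iff.mp hd)]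
  | add x y _ _ hx hy =>
    intro d hd
    classical
    rcases Finset.mem_union.mp (support_add hd) with hd | hd
    exacts [hx d hd, hy d hd]
  | mul x y _ _ hx hy =>
    intro d hd
    classical
    obtain ⟨a, ha, b, hb, rfl⟩ := Finset.mem_add.mp (support_mul _ _ hd)
    rw [map_add]
    exact add_nonneg (hx a ha) (hy b hb)

theorem zero_le_wdeg_of_mem_initAlg
    (hw : ∀ h ∈ A, h ≠ 0 → ((0 : Γ) : WithBot Γ) ≤ wdeg w h) {h : MvPolynomial (Fin n) k}
    (hh : h ∈ initAlg w A) (h0 : h ≠ 0) : ((0 : Γ) : WithBot Γ) ≤ wdeg w h := by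
  obtain ⟨d, hd, hdeg⟩ := exists_weight_eq_wdeg (w := w) h0
  rw [hdeg]
  exact WithBot.coe_le_coe.mpr (zero_le_weight_of_mem_initAlg hw hh d hd)

variable [CharZero k]

/-- `P^m` divides the leading form of `Φ` in `A^w[y]`, and the cofactor has nonnegative degree. -/
theorem nsmul_wdegG_le_wdegG {g : MvPolynomial (Fin n) k} (hg : g ≠ 0)
    (hwg : ((0 : Γ) : WithBot Γ) ≤ wdeg w g)
    (hw : ∀ h ∈ A, h ≠ 0 → ((0 : Γ) : WithBot Γ) ≤ wdeg w h) {P : Polynomial (initAlg w A)}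
    (hP : RingHom.ker (aeval (lform w g) :
      Polynomial (initAlg w A) →ₐ[initAlg w A] MvPolynomial (Fin n) k) = Ideal.span {P})
    {Φ : Polynomial (MvPolynomial (Fin n) k)} (hΦ : Φ ≠ 0) (hΦA : ∀ i, Φ.coeff i ∈ A) {m : ℕ}
    (hm : ∀ t < m, (derivative^[t] (pLform w g Φ)).eval (lform w g) = 0) :
    m • wdegG w g (P.map (algebraMap (initAlg w A) (MvPolynomial (Fin n) k))) ≤ wdegG w g Φ := by
  set ι := algebraMap (initAlg w A) (MvPolynomial (Fin n) k)
  obtain ⟨Θ, hΘ⟩ := pLform_mem_lifts (w := w) (g := g) hΦA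
  rw [coe_mapRingHom] at hΘ
  obtain ⟨Q, rfl⟩ : P ^ m ∣ Θ :=
    pow_dvd_of_aeval_iterate_derivative_eq_zero Subtype.val_injective hP fun t ht => by
      rw [Polynomial.aeval_def, ← Polynomial.eval_map, ← iterate_derivative_map, hΘ]
      exact hm t ht
  have hQ : Q.map ι ≠ 0 := fun h0 => pLform_ne_zero (w := w) (g := g) hΦ
    (by rw [← hΘ, Polynomial.map_mul, h0, mul_zero])
  have hQ_nonneg : ((0 : Γ) : WithBot Γ) ≤ wdegG w g (Q.map ι) :=
    zero_le_wdegG hQ hwg fun i hi => zero_le_wdeg_of_mem_initAlg hw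
      (by rw [Polynomial.coeff_map]; exact (Q.coeff i).2) hi
  calc m • wdegG w g (P.map ι) = m • wdegG w g (P.map ι) + (0 : Γ) := by simp
    _ ≤ m • wdegG w g (P.map ι) + wdegG w g (Q.map ι) := add_le_add le_rfl hQ_nonneg
    _ = wdegG w g Φ := by
      rw [← wdegG_pow hg, ← wdegG_mul hg, ← Polynomial.map_pow, ← Polynomial.map_mul, hΘ,
        wdegG_pLform]

end InitialAlgebra

theorem stmt8_general (r : ℕ) (f : Fin r → MvPolynomial (Fin n) k)
    (g : MvPolynomial (Fin n) k) (hg : g ≠ 0) (w : Fin n → Γ)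
    (A : Subalgebra k (MvPolynomial (Fin n) k)) (hA : A = Algebra.adjoin k (Set.range f))
    (hw : ∀ h ∈ A, h ≠ 0 → ((0 : Γ) : WithBot Γ) ≤ wdeg w h)
    (hwg : ((0 : Γ) : WithBot Γ) ≤ wdeg w g)
    (P : Polynomial (initAlg w A))
    (hP : RingHom.ker
        (Polynomial.aeval (lform w g) :
          Polynomial (initAlg w A) →ₐ[initAlg w A] MvPolynomial (Fin n) k)
      = Ideal.span {P})
    (Φ : Polynomial (MvPolynomial (Fin n) k)) (hΦ : Φ ≠ 0) (hΦA : ∀ i, Φ.coeff i ∈ A)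
    (dω dg : Γ) (hdω : wedgeDeg w f = (dω : WithBot Γ)) (hdg : wdeg w g = (dg : WithBot Γ))
    (M : WithBot Γ)
    (hM : M = wedgeDeg w (Fin.snoc f g) + ((-dω - dg : Γ) : WithBot Γ)) :
    wdeg w (Φ.eval g) ≥
      mwg w g Φ •
        (wdegG w g (P.map (algebraMap (initAlg w A) (MvPolynomial (Fin n) k))) + M) := by
  set m := mwg w g Φ
  have hdiv := nsmul_wdegG_le_wdegG hg hwg hw hP hΦ hΦA fun _ =>
    eval_lform_iterate_derivative_pLform_eq_zero hg
  have hshift := wdeg_eval_iterate_derivative_mwg_add (w := w) (Φ := Φ) hg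
  have hchain := wdeg_eval_iterate_derivative_add_le (w := w) (hA ▸ hΦA) g m
  rw [hdg] at hshift
  rw [hdω] at hchain
  rw [← hshift] at hdiv
  rw [ge_iff_le, hM, nsmul_add, nsmul_add, ← add_assoc]
  calc m • wdegG w g (P.map (algebraMap (initAlg w A) (MvPolynomial (Fin n) k))) +
        m • wedgeDeg w (Fin.snoc f g) + m • ((-dω - dg : Γ) : WithBot Γ)
      ≤ wdeg w ((derivative^[m] Φ).eval g) + m • wedgeDeg w (Fin.snoc f g) +
          m • ((dg + (-dω - dg) : Γ) : WithBot Γ) := by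
        rw [WithBot.coe_add, nsmul_add]
        convert add_le_add (add_le_add hdiv le_rfl) le_rfl using 1
        abel
    _ ≤ m • (dω : WithBot Γ) + wdeg w (Φ.eval g) + m • ((dg + (-dω - dg) : Γ) : WithBot Γ) :=
        add_le_add hchain le_rfl
    _ = wdeg w (Φ.eval g) := by
        rw [← WithBot.coe_nsmul, ← WithBot.coe_nsmul, add_right_comm, ← WithBot.coe_add,
          ← nsmul_add, show dω + (dg + (-dω - dg)) = 0 by abel, smul_zero, WithBot.coe_zero,
          zero_add]

/-- Theorem (ii): if moreover `deg_w g ≥ 0` and `I(A^w, g^w)` is principal with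
generator `P`, then `deg_w Φ(g) ≥ m_w^g(Φ)·(deg_w^g P + M)`, where
`M = deg_w(ω ∧ dg) − deg_w ω − deg_w g`. -/
theorem stmt8 (r : ℕ) (hr : 0 < r) (f : Fin r → MvPolynomial (Fin n) k)
    (hf : AlgebraicIndependent k f)
    (g : MvPolynomial (Fin n) k) (hg : g ≠ 0) (w : Fin n → Γ)
    (A : Subalgebra k (MvPolynomial (Fin n) k)) (hA : A = Algebra.adjoin k (Set.range f))
    (hw : ∀ h ∈ A, h ≠ 0 → ((0 : Γ) : WithBot Γ) ≤ wdeg w h)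
    (hwg : ((0 : Γ) : WithBot Γ) ≤ wdeg w g)
    (P : Polynomial (initAlg w A))
    (hP : RingHom.ker
        (Polynomial.aeval (lform w g) :
          Polynomial (initAlg w A) →ₐ[initAlg w A] MvPolynomial (Fin n) k)
      = Ideal.span {P})
    (Φ : Polynomial (MvPolynomial (Fin n) k)) (hΦ : Φ ≠ 0) (hΦA : ∀ i, Φ.coeff i ∈ A)
    (dω dg : Γ) (hdω : wedgeDeg w f = (dω : WithBot Γ)) (hdg : wdeg w g = (dg : WithBot Γ))
    (M : WithBot Γ)
    (hM : M = wedgeDeg w (Fin.snoc f g) + ((-dω - dg : Γ) : WithBot Γ)) :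
    wdeg w (Φ.eval g) ≥
      mwg w g Φ •
        (wdegG w g (P.map (algebraMap (initAlg w A) (MvPolynomial (Fin n) k))) + M) :=
  stmt8_general r f g hg w A hA hw hwg P hP Φ hΦ hΦA dω dg hdω hdg M hM
end

section
/- Let f and g be w-homogeneous polynomials in k[x] with deg_w f > 0 and deg_w g > 0, for some w ∈ Γ^n. If f and g are algebraically dependent over k, then there exist coprime natural numbers l and m and a scalar α ∈ k such that g^l = α·f^m. -/
/-!
Let `a = deg_w f` and `b = deg_w g`. Grading `k[y₀, y₁]` by giving `y₀, y₁` the weights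
`a, b`, the map `P ↦ P(f, g)` preserves degrees, so every weighted homogeneous component of a
relation `P(f, g) = 0` is again a relation. Take a nonzero one, `Q`. A single term
`c f^i g^j` is nonzero, so `Q` has two exponents `e ≠ e'` with `e₀ a + e₁ b = e'₀ a + e'₁ b`;
as `a, b > 0` this gives coprime `l, m > 0` with `l a = m b`, and then all exponents of `Q` lie
on one lattice line with step `(l, -m)`. Hence `g^m / f^l` is a root of a nonzero polynomial
over `k`. As `k[x]` is integrally closed and has a `k`-point, `k` is algebraically closed in its
fraction field, so `g^m / f^l` is a constant.
-/

open MvPolynomial Polynomial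

set_option synthInstance.maxHeartbeats 1000000
set_option maxHeartbeats 1000000

variable {k : Type*} [Field k] [CharZero k] {n : ℕ}
variable {Γ : Type*} [AddCommGroup Γ] [LinearOrder Γ] [IsOrderedAddMonoid Γ]

namespace MvPolynomial

section WeightedHomogeneous

variable {σ τ R M : Type*} [CommSemiring R] [AddCommMonoid M]
  {w : σ → M} {δ : τ → M} {v : τ → MvPolynomial σ R}

theorem IsWeightedHomogeneous.aeval_monomial (hv : ∀ j, (v j).IsWeightedHomogeneous w (δ j))
    (e : τ →₀ ℕ) (r : R) :
    (aeval v (monomial e r)).IsWeightedHomogeneous w (Finsupp.weight δ e) := by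
  rw [MvPolynomial.aeval_monomial, algebraMap_eq, Finsupp.weight_apply]
  exact (IsWeightedHomogeneous.prod _ _ _ fun j _ => (hv j).pow (e j)).C_mul r

theorem aeval_weightedHomogeneousComponent_eq_zero
    (hv : ∀ j, (v j).IsWeightedHomogeneous w (δ j)) {P : MvPolynomial τ R}
    (hP : aeval v P = 0) (γ : M) : aeval v (weightedHomogeneousComponent δ γ P) = 0 := by
  classical
  have hcomp := congrArg (weightedHomogeneousComponent w γ) hP
  rw [P.as_sum, map_sum, map_sum, map_zero] at hcomp
  rw [weightedHomogeneousComponent_apply, map_sum, Finset.sum_filter]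
  refine (Finset.sum_congr rfl fun e _ => ?_).trans hcomp
  rw [weightedHomogeneousComponent_of_mem (IsWeightedHomogeneous.aeval_monomial hv e _)]
  exact if_congr eq_comm rfl rfl

theorem exists_isWeightedHomogeneous_aeval_eq_zero
    (hv : ∀ j, (v j).IsWeightedHomogeneous w (δ j)) {P : MvPolynomial τ R} (hP0 : P ≠ 0)
    (hP : aeval v P = 0) :
    ∃ (γ : M) (Q : MvPolynomial τ R), Q.IsWeightedHomogeneous δ γ ∧ Q ≠ 0 ∧ aeval v Q = 0 := by
  classical
  obtain ⟨e, he⟩ := support_nonempty.mpr hP0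
  refine ⟨_, _, weightedHomogeneousComponent_isWeightedHomogeneous (Finsupp.weight δ e) P,
    ne_zero_iff.mpr ⟨e, ?_⟩, aeval_weightedHomogeneousComponent_eq_zero hv hP _⟩
  rw [coeff_weightedHomogeneousComponent, if_pos rfl]
  exact mem_support_iff.mp he

end WeightedHomogeneous

end MvPolynomial

theorem exists_coprime_nsmul_eq_nsmul {M : Type*} [AddCommMonoid M] [IsAddTorsionFree M]
    {a b : M} {p q : ℕ} (hp : 0 < p) (hq : 0 < q) (h : p • a = q • b) :
    ∃ l m : ℕ, 0 < l ∧ 0 < m ∧ l.Coprime m ∧ l • a = m • b := by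
  have hd : 0 < p.gcd q := Nat.gcd_pos_of_pos_left q hp
  refine ⟨p / p.gcd q, q / p.gcd q, Nat.div_pos (Nat.gcd_le_left q hp) hd,
    Nat.div_pos (Nat.gcd_le_right (m := p) hq) hd, Nat.coprime_div_gcd_div_gcd hd,
    nsmul_right_injective hd.ne' ?_⟩
  simp only [← mul_nsmul', Nat.mul_div_cancel' (Nat.gcd_dvd_left p q),
    Nat.mul_div_cancel' (Nat.gcd_dvd_right p q), h]

section OrderedGroup

variable {Γ : Type*} [AddCommGroup Γ] [LinearOrder Γ] [IsOrderedAddMonoid Γ] {a b : Γ}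

theorem exists_nsmul_eq_nsmul_of_nsmul_add_nsmul_eq (ha : 0 < a) (hb : 0 < b) {i j i' j' : ℕ}
    (h : i • a + j • b = i' • a + j' • b) (hi : i < i') :
    ∃ p q : ℕ, 0 < p ∧ 0 < q ∧ p • a = q • b := by
  obtain ⟨p, rfl⟩ := Nat.exists_eq_add_of_lt hi
  have hj : j' < j := by
    by_contra! hj
    refine h.not_lt (add_lt_add_of_lt_of_le ?_ (nsmul_le_nsmul_left hb.le hj))
    exact nsmul_lt_nsmul_left ha (by omega)
  obtain ⟨q, rfl⟩ := Nat.exists_eq_add_of_lt hj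
  refine ⟨p + 1, q + 1, p.succ_pos, q.succ_pos, ?_⟩
  simp only [add_nsmul, one_nsmul] at h
  linear_combination (norm := module) -h

theorem exists_coprime_nsmul_eq_nsmul_of_nsmul_add_nsmul_eq (ha : 0 < a) (hb : 0 < b)
    {i j i' j' : ℕ} (h : i • a + j • b = i' • a + j' • b) (hne : (i, j) ≠ (i', j')) :
    ∃ l m : ℕ, 0 < l ∧ 0 < m ∧ l.Coprime m ∧ l • a = m • b := by
  rcases lt_trichotomy i i' with hi | rfl | hi
  · obtain ⟨p, q, hp, hq, hpq⟩ := exists_nsmul_eq_nsmul_of_nsmul_add_nsmul_eq ha hb h hi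
    exact exists_coprime_nsmul_eq_nsmul hp hq hpq
  · exact absurd ((nsmul_left_strictMono hb).injective (add_left_cancel h)) (by simpa using hne)
  · obtain ⟨p, q, hp, hq, hpq⟩ := exists_nsmul_eq_nsmul_of_nsmul_add_nsmul_eq ha hb h.symm hi
    exact exists_coprime_nsmul_eq_nsmul hp hq hpq

theorem mul_add_mul_eq_of_nsmul_add_nsmul_eq (hb : 0 < b) {l m : ℕ} (hlm : l • a = m • b)
    {i j i' j' : ℕ} (h : i • a + j • b = i' • a + j' • b) :
    m * i + l * j = m * i' + l * j' := by
  have key : ∀ i j : ℕ, l • (i • a + j • b) = (m * i + l * j) • b := fun i j => by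
    rw [nsmul_add, ← mul_nsmul', mul_comm l i, mul_nsmul', hlm, ← mul_nsmul', ← mul_nsmul',
      add_nsmul, mul_comm i m]
  apply (nsmul_left_strictMono hb).injective
  simp only [← key, h]

end OrderedGroup

theorem Nat.exists_eq_add_mul_of_mul_add_mul_eq {l m i j i' j' : ℕ} (hl : 0 < l)
    (hlm : l.Coprime m) (h : m * i + l * j = m * i' + l * j') (hi : i ≤ i') :
    ∃ t, i' = i + t * l ∧ j = j' + t * m := by
  obtain ⟨p, rfl⟩ := Nat.exists_eq_add_of_le hi
  have hmp : m * p + l * j' = l * j := by linarith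
  obtain ⟨t, rfl⟩ : l ∣ p :=
    hlm.dvd_of_dvd_mul_left ((Nat.dvd_add_left (dvd_mul_right l j')).mp (hmp ▸ dvd_mul_right l j))
  refine ⟨t, by ring, Nat.eq_of_mul_eq_mul_left hl ?_⟩
  linarith

theorem MvPolynomial.aeval_vecCons_monomial {R A : Type*} [CommSemiring R] [CommSemiring A]
    [Algebra R A] (x y : A) (e : Fin 2 →₀ ℕ) (r : R) :
    aeval ![x, y] (monomial e r) = algebraMap R A r * x ^ e 0 * y ^ e 1 := by
  rw [aeval_monomial, Finsupp.prod_fintype _ _ fun _ => pow_zero _, Fin.prod_univ_two, mul_assoc]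
  rfl

/-- Dividing the relation by `x ^ e₀ 0 * y ^ e₀ 1` leaves a polynomial in `y ^ m / x ^ l` whose
constant term is the coefficient of `e₀`. -/
theorem isAlgebraic_pow_div_pow {k K : Type*} [Field k] [Field K] [Algebra k K] {x y : K}
    (hx : x ≠ 0) (hy : y ≠ 0) {Q : MvPolynomial (Fin 2) k} {e₀ : Fin 2 →₀ ℕ}
    (he₀ : e₀ ∈ Q.support) {l m : ℕ} (hl : 0 < l)
    (hline : ∀ e ∈ Q.support, ∃ t, e₀ 0 = e 0 + t * l ∧ e 1 = e₀ 1 + t * m)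
    (hQ : aeval ![x, y] Q = 0) : IsAlgebraic k (y ^ m / x ^ l) := by
  classical
  choose! t ht using hline
  have ht₀ : t e₀ = 0 := by
    have : t e₀ * l = 0 := by linarith [(ht e₀ he₀).1]
    exact (mul_eq_zero.mp this).resolve_right hl.ne'
  have ht_eq_zero : ∀ e ∈ Q.support, t e = 0 → e = e₀ := fun e he h0 => by
    obtain ⟨h₀, h₁⟩ := ht e he
    rw [h0, zero_mul, add_zero] at h₀ h₁
    ext i
    fin_cases i
    exacts [h₀.symm, h₁]
  refine ⟨∑ e ∈ Q.support, Polynomial.monomial (t e) (coeff e Q), fun h => ?_, ?_⟩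
  · have := congrArg (Polynomial.coeff · 0) h
    simp only [Polynomial.finsetSum_coeff, Polynomial.coeff_monomial, Polynomial.coeff_zero] at this
    rw [Finset.sum_eq_single_of_mem e₀ he₀ fun e he hne => if_neg fun h0 => hne
      (ht_eq_zero e he h0), if_pos ht₀] at this
    exact mem_support_iff.mp he₀ this
  · have hterm : ∀ e ∈ Q.support, aeval ![x, y] (monomial e (coeff e Q)) =
        x ^ e₀ 0 * y ^ e₀ 1 * Polynomial.aeval (y ^ m / x ^ l)
          (Polynomial.monomial (t e) (coeff e Q)) := fun e he => by
      obtain ⟨h₀, h₁⟩ := ht e he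
      rw [aeval_vecCons_monomial, Polynomial.aeval_monomial, h₀, h₁, div_pow, ← pow_mul,
        ← pow_mul, pow_add, pow_add]
      field_simp
      ring
    rw [Q.as_sum, map_sum, Finset.sum_congr rfl hterm, ← Finset.mul_sum, ← map_sum] at hQ
    exact (mul_eq_zero.mp hQ).resolve_left (by simp [hx, hy])

theorem mem_range_algebraMap_of_isIntegral {k A : Type*} [Field k] [CommRing A] [IsDomain A]
    [Algebra k A] (ψ : A →ₐ[k] k) {x : A} (hx : IsIntegral k x) :
    x ∈ (algebraMap k A).range := by
  refine minpoly.natDegree_eq_one_iff.mp (Polynomial.natDegree_eq_of_degree_eq_some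
    (Polynomial.degree_eq_one_of_irreducible_of_root (minpoly.irreducible hx) (x := ψ x) ?_))
  rw [Polynomial.IsRoot, ← Polynomial.coe_aeval_eq_eval, Polynomial.aeval_algHom_apply,
    minpoly.aeval, map_zero]

theorem MvPolynomial.exists_eq_C_mul_of_isAlgebraic_div {σ k : Type*} [Field k]
    {u v : MvPolynomial σ k} (hv : v ≠ 0)
    (h : IsAlgebraic k (algebraMap (MvPolynomial σ k) (FractionRing (MvPolynomial σ k)) u /
      algebraMap (MvPolynomial σ k) (FractionRing (MvPolynomial σ k)) v)) :
    ∃ α : k, u = MvPolynomial.C α * v := by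
  have hinj := IsFractionRing.injective (MvPolynomial σ k) (FractionRing (MvPolynomial σ k))
  obtain ⟨H, hH⟩ :=
    IsIntegrallyClosed.isIntegral_iff.mp (h.isIntegral.tower_top (A := MvPolynomial σ k))
  have hHint : IsIntegral k H := (isIntegral_algebraMap_iff hinj).mp (hH ▸ h.isIntegral)
  obtain ⟨α, rfl⟩ := mem_range_algebraMap_of_isIntegral (aeval fun _ => 0) hHint
  refine ⟨α, hinj ?_⟩
  rw [map_mul, ← algebraMap_eq, hH, div_mul_cancel₀ _ ((map_ne_zero_iff _ hinj).mpr hv)]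

theorem exists_coprime_pow_eq_C_mul_pow_of_isWeightedHomogeneous {σ k Γ : Type*} [Field k]
    [AddCommGroup Γ] [LinearOrder Γ] [IsOrderedAddMonoid Γ] {f g : MvPolynomial σ k}
    {a b γ : Γ} (ha : 0 < a) (hb : 0 < b) (hf0 : f ≠ 0) (hg0 : g ≠ 0)
    {Q : MvPolynomial (Fin 2) k} (hQhom : Q.IsWeightedHomogeneous ![a, b] γ) (hQ0 : Q ≠ 0)
    (hQ : aeval ![f, g] Q = 0) :
    ∃ l m : ℕ, 0 < l ∧ 0 < m ∧ l.Coprime m ∧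
      ∃ α : k, g ^ m = MvPolynomial.C α * f ^ l := by
  classical
  have hweight : ∀ e ∈ Q.support, e 0 • a + e 1 • b = γ := fun e he => by
    simpa [Finsupp.weight_eq_sum, Fin.sum_univ_two] using hQhom (mem_support_iff.mp he)
  obtain ⟨e₀, he₀, hmax⟩ := Q.support.exists_max_image (· 0) (support_nonempty.mpr hQ0)
  -- a single monomial cannot vanish at `(f, g)`
  obtain ⟨e, he, hne⟩ : ∃ e ∈ Q.support, e ≠ e₀ := by
    by_contra! hsingle
    rw [Q.as_sum, map_sum, Finset.sum_eq_single_of_mem e₀ he₀ fun e he hne => absurd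
      (hsingle e he) hne, aeval_vecCons_monomial] at hQ
    simp [hf0, hg0, mem_support_iff.mp he₀] at hQ
  obtain ⟨l, m, hl, hm, hlm, hlmab⟩ := exists_coprime_nsmul_eq_nsmul_of_nsmul_add_nsmul_eq ha hb
    ((hweight e he).trans (hweight e₀ he₀).symm)
    fun h => hne (Finsupp.ext (Fin.forall_fin_two.mpr (Prod.ext_iff.mp h)))
  have hline : ∀ e ∈ Q.support, ∃ t, e₀ 0 = e 0 + t * l ∧ e 1 = e₀ 1 + t * m := fun e he =>
    Nat.exists_eq_add_mul_of_mul_add_mul_eq hl hlm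
      (mul_add_mul_eq_of_nsmul_add_nsmul_eq hb hlmab ((hweight e he).trans (hweight e₀ he₀).symm))
      (hmax e he)
  set φ := algebraMap (MvPolynomial σ k) (FractionRing (MvPolynomial σ k))
  have hinj : Function.Injective φ := IsFractionRing.injective _ _
  have hQφ : aeval ![φ f, φ g] Q = 0 := by
    rw [show ![φ f, φ g] = φ ∘ ![f, g] by ext i; fin_cases i <;> rfl,
      MvPolynomial.aeval_algebraMap_apply, hQ, map_zero]
  have halg := isAlgebraic_pow_div_pow ((map_ne_zero_iff φ hinj).mpr hf0)
    ((map_ne_zero_iff φ hinj).mpr hg0) he₀ hl hline hQφ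
  rw [← map_pow, ← map_pow] at halg
  obtain ⟨α, hα⟩ := exists_eq_C_mul_of_isAlgebraic_div (pow_ne_zero l hf0) halg
  exact ⟨l, m, hl, hm, hlm, α, hα⟩

theorem IsWHom.exists_pos_isWeightedHomogeneous {k Γ : Type*} [Field k] [AddCommGroup Γ]
    [LinearOrder Γ] {n : ℕ} {w : Fin n → Γ} {f : MvPolynomial (Fin n) k} (hf : IsWHom w f)
    (hdf : ((0 : Γ) : WithBot Γ) < wdeg w f) :
    f ≠ 0 ∧ ∃ a : Γ, 0 < a ∧ f.IsWeightedHomogeneous w a := by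
  have hf0 : f ≠ 0 := by
    rintro rfl
    simp [wdeg] at hdf
  obtain ⟨a, ha⟩ := hf
  have hwdeg : wdeg w f = a := by
    rw [wdeg, Finset.sup_congr rfl fun d hd => congrArg _ (ha d hd),
      Finset.sup_const (support_nonempty.mpr hf0)]
  refine ⟨hf0, a, by simpa [hwdeg] using hdf, fun d hd => ?_⟩
  rw [Finsupp.weight_eq_sum]
  exact ha d (mem_support_iff.mpr hd)

/-- If `f` and `g` are `w`-homogeneous with `deg_w f > 0`, `deg_w g > 0`, and `f, g` are
algebraically dependent over `k`, then there are coprime natural numbers `l, m` and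
`α ∈ k` with `g^l = α f^m`. -/
theorem stmt9 (w : Fin n → Γ) (f g : MvPolynomial (Fin n) k)
    (hf : IsWHom w f) (hg : IsWHom w g)
    (hdf : ((0 : Γ) : WithBot Γ) < wdeg w f) (hdg : ((0 : Γ) : WithBot Γ) < wdeg w g)
    (hdep : ¬ AlgebraicIndependent k ![f, g]) :
    ∃ l m : ℕ, 0 < l ∧ 0 < m ∧ Nat.Coprime l m ∧
      ∃ α : k, g ^ l = MvPolynomial.C α * f ^ m := by
  obtain ⟨hf0, a, ha, hfa⟩ := hf.exists_pos_isWeightedHomogeneous hdf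
  obtain ⟨hg0, b, hb, hgb⟩ := hg.exists_pos_isWeightedHomogeneous hdg
  obtain ⟨P, hPfg, hP⟩ : ∃ P, MvPolynomial.aeval ![f, g] P = 0 ∧ P ≠ 0 := by
    rw [algebraicIndependent_iff] at hdep
    push Not at hdep
    exact hdep
  obtain ⟨γ, Q, hQhom, hQ0, hQ⟩ :=
    exists_isWeightedHomogeneous_aeval_eq_zero (δ := ![a, b])
      (Fin.forall_fin_two.mpr ⟨hfa, hgb⟩) hP hPfg
  obtain ⟨l, m, hl, hm, hlm, α, hα⟩ :=
    exists_coprime_pow_eq_C_mul_pow_of_isWeightedHomogeneous ha hb hf0 hg0 hQhom hQ0 hQ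
  exact ⟨m, l, hm, hl, hlm.symm, α, hα⟩
end

section
/- Let f and g be w-homogeneous polynomials in k[x] with deg_w f > 0 and deg_w g > 0, for some w ∈ Γ^n, and suppose l and m are coprime natural numbers and α ∈ k satisfies g^l = α·f^m. Then the field extension degree [k(f)(g) : k(f)] equals l. -/
open MvPolynomial Polynomial

set_option synthInstance.maxHeartbeats 1000000
set_option maxHeartbeats 1000000

variable {k : Type*} [Field k] [CharZero k] {n : ℕ}
variable {Γ : Type*} [AddCommGroup Γ] [LinearOrder Γ] [IsOrderedAddMonoid Γ]

/-!
Since `f` has positive `w`-degree it is not constant, hence transcendental over `k` (a nonzero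
element of `k[x]` algebraic over `k` is a unit), so `k(f) ≅ k(t)` with `f ↦ t`. Writing `1 = l v + m u` (Bézout), `h = g^u f^v` satisfies
`h^l = α^u f` and `g = α^v h^m`, so `k(f)(g) = k(f)(h)`, and `X^l - α^u t` is irreducible over
`k(t)` by Eisenstein at `t` and Gauss's lemma.
-/

namespace Polynomial

theorem _root_.Prime.irreducible_X_pow_sub_C {R : Type*} [CommRing R] [IsDomain R] {p : R}
    (hp : Prime p) {l : ℕ} (hl : 0 < l) : Irreducible (X ^ l - C p : R[X]) := by
  have hmonic : (X ^ l - C p : R[X]).Monic := monic_X_pow_sub_C p hl.ne'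
  have hdeg : (X ^ l - C p : R[X]).natDegree = l := natDegree_X_pow_sub_C
  have hprime : (Ideal.span {p}).IsPrime := (Ideal.span_singleton_prime hp.ne_zero).2 hp
  refine IsEisensteinAt.irreducible ?_ hprime hmonic.isPrimitive (hdeg.symm ▸ hl)
  refine ⟨?_, fun {i} hi => ?_, ?_⟩
  · rw [hmonic.leadingCoeff, Ideal.mem_span_singleton]
    exact hp.not_dvd_one
  · rw [hdeg] at hi
    rw [coeff_sub, coeff_X_pow, if_neg hi.ne, coeff_C, zero_sub, neg_mem_iff]
    split_ifs
    · exact Ideal.mem_span_singleton_self p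
    · exact zero_mem _
  · rw [coeff_sub, coeff_X_pow, if_neg hl.ne, coeff_C_zero, zero_sub, neg_mem_iff,
      Ideal.span_singleton_pow, Ideal.mem_span_singleton, sq]
    intro h
    exact hp.not_dvd_one ((mul_dvd_mul_iff_left hp.ne_zero).1 (by simpa using h))

end Polynomial

theorem RatFunc.irreducible_X_pow_sub_C_mul_X {K : Type*} [Field K] {l : ℕ} (hl : 0 < l)
    {c : K} (hc : c ≠ 0) :
    Irreducible (Polynomial.X ^ l - Polynomial.C (C c * X) : (RatFunc K)[X]) := by
  have hprime : Prime (Polynomial.C c * Polynomial.X : K[X]) :=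
    (associated_unit_mul_right _ _ (Polynomial.isUnit_C.2 hc.isUnit)).prime Polynomial.prime_X
  have h := ((monic_X_pow_sub_C _ hl.ne').irreducible_iff_irreducible_map_fraction_map
    (K := RatFunc K)).1 (hprime.irreducible_X_pow_sub_C hl)
  simpa [Polynomial.map_sub] using h

theorem exists_zpow_mul_zpow_pow_eq {L : Type*} [Field L] {g a b : L} (hg : g ≠ 0) (ha : a ≠ 0)
    {l m : ℕ} (hco : l.Coprime m) (hrel : g ^ l = b * a ^ m) :
    ∃ u v : ℤ, (g ^ u * a ^ v) ^ l = b ^ u * a ∧ b ^ v * (g ^ u * a ^ v) ^ m = g := by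
  obtain ⟨v, u, hbez⟩ : ∃ v u : ℤ, l * v + m * u = 1 :=
    ⟨l.gcdA m, l.gcdB m, by rw [← Nat.gcd_eq_gcd_ab, hco, Nat.cast_one]⟩
  have hrel' : g ^ (l : ℤ) = b * a ^ (m : ℤ) := by simpa only [zpow_natCast] using hrel
  refine ⟨u, v, ?_, ?_⟩
  · calc (g ^ u * a ^ v) ^ l = (g ^ (l : ℤ)) ^ u * a ^ (l * v) := by
          rw [← zpow_natCast, mul_zpow, ← zpow_mul, ← zpow_mul, ← zpow_mul, mul_comm u,
            mul_comm v]
      _ = b ^ u * a ^ (l * v + m * u) := by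
          rw [hrel', mul_zpow, ← zpow_mul, zpow_add₀ ha, mul_comm (m : ℤ)]; ring
      _ = b ^ u * a := by rw [hbez, zpow_one]
  · calc b ^ v * (g ^ u * a ^ v) ^ m = (b * a ^ (m : ℤ)) ^ v * g ^ (m * u) := by
          rw [← zpow_natCast, mul_zpow, mul_zpow, ← zpow_mul, ← zpow_mul, ← zpow_mul,
            mul_comm u, mul_comm v]; ring
      _ = g ^ (l * v + m * u) := by rw [← hrel', ← zpow_mul, zpow_add₀ hg]
      _ = g := by rw [hbez, zpow_one]

namespace IntermediateField

theorem finrank_adjoin_of_pow_eq {K L : Type*} [Field K] [Field L] [Algebra K L] {h : L} {c : K}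
    {l : ℕ} (hl : 0 < l) (hirr : Irreducible (Polynomial.X ^ l - Polynomial.C c : K[X]))
    (hh : h ^ l = algebraMap K L c) : Module.finrank K K⟮h⟯ = l := by
  have hmonic : (Polynomial.X ^ l - Polynomial.C c : K[X]).Monic := monic_X_pow_sub_C c hl.ne'
  have hroot : aeval h (Polynomial.X ^ l - Polynomial.C c : K[X]) = 0 := by
    simp [Polynomial.aeval_X, hh]
  rw [adjoin.finrank ⟨_, hmonic, hroot⟩,
    ← minpoly.eq_of_irreducible_of_monic hirr hroot hmonic, Polynomial.natDegree_X_pow_sub_C]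

theorem finrank_adjoin_of_pow_eq_mul_pow {K L : Type*} [Field K] [Field L] [Algebra K L]
    {g : L} {a b : K} {l m : ℕ} (hg : g ≠ 0) (ha : a ≠ 0) (hl : 0 < l) (hco : l.Coprime m)
    (hrel : g ^ l = algebraMap K L (b * a ^ m))
    (hirr : ∀ u : ℤ, Irreducible (Polynomial.X ^ l - Polynomial.C (b ^ u * a) : K[X])) :
    Module.finrank K K⟮g⟯ = l := by
  rw [map_mul, map_pow] at hrel
  obtain ⟨u, v, hpow, hg_eq⟩ := exists_zpow_mul_zpow_pow_eq hg
    ((map_ne_zero (algebraMap K L)).2 ha) hco hrel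
  set h := g ^ u * algebraMap K L a ^ v
  have hadj : K⟮g⟯ = K⟮h⟯ := by
    refine le_antisymm (adjoin_simple_le_iff.2 ?_) (adjoin_simple_le_iff.2 ?_)
    · rw [← hg_eq]
      exact mul_mem (zpow_mem (algebraMap_mem _ b) v) (pow_mem (mem_adjoin_simple_self K h) m)
    · exact mul_mem (zpow_mem (mem_adjoin_simple_self K g) u) (zpow_mem (algebraMap_mem _ a) v)
  rw [hadj]
  exact finrank_adjoin_of_pow_eq hl (hirr u) (by rw [hpow, map_mul, map_zpow₀])

theorem finrank_adjoin_of_pow_eq_C_mul_pow {K L : Type*} [Field K] [Field L] [Algebra K L]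
    {x g : L} (hx : Transcendental K x) (hg : g ≠ 0) {l m : ℕ} (hl : 0 < l) (hco : l.Coprime m)
    {α : K} (hrel : g ^ l = algebraMap K L α * x ^ m) :
    Module.finrank K⟮x⟯ K⟮x⟯⟮g⟯ = l := by
  have hα : α ≠ 0 := by
    rintro rfl
    exact hg (pow_eq_zero_iff hl.ne' |>.1 (by simpa using hrel))
  set e := RatFunc.algEquivOfTranscendental x hx
  have hgen : e RatFunc.X = AdjoinSimple.gen K x := Subtype.ext (by simp [e])
  refine finrank_adjoin_of_pow_eq_mul_pow (a := AdjoinSimple.gen K x)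
    (b := algebraMap K K⟮x⟯ α) hg ?_ hl hco (by simpa using hrel) fun u => ?_
  · exact hgen ▸ (map_ne_zero e).2 RatFunc.X_ne_zero
  · have hmap : (Polynomial.X ^ l - Polynomial.C (RatFunc.C (α ^ u) * RatFunc.X)).map
          (e : RatFunc K →+* K⟮x⟯) =
        Polynomial.X ^ l - Polynomial.C (algebraMap K K⟮x⟯ α ^ u * AdjoinSimple.gen K x) := by
      simp [Polynomial.map_sub, hgen, ← RatFunc.algebraMap_eq_C]
    rw [← hmap]
    exact (MulEquiv.irreducible_iff (Polynomial.mapEquiv e.toRingEquiv)).2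
      (RatFunc.irreducible_X_pow_sub_C_mul_X hl (zpow_ne_zero u hα))

end IntermediateField

theorem MvPolynomial.exists_eq_C_of_isAlgebraic {σ K : Type*} [Field K] {f : MvPolynomial σ K}
    (hf : IsAlgebraic K f) : ∃ c, f = C c := by
  rcases eq_or_ne f 0 with rfl | hf0
  · exact ⟨0, C_0.symm⟩
  · exact (isUnit_iff_eq_C_of_isReduced.1 (hf.isIntegral.isUnit hf0)).imp fun _ h => h.2

theorem wdeg_C_le_zero {K Γ : Type*} [Field K] [AddCommGroup Γ] [LinearOrder Γ] {n : ℕ}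
    (w : Fin n → Γ) (c : K) :
    wdeg w (C c : MvPolynomial (Fin n) K) ≤ ((0 : Γ) : WithBot Γ) := by
  classical
  refine Finset.sup_le fun d hd => ?_
  rw [MvPolynomial.support_C] at hd
  split_ifs at hd
  · simp at hd
  · simp [Finset.mem_singleton.1 hd]

theorem transcendental_of_wdeg_pos {K Γ : Type*} [Field K] [AddCommGroup Γ] [LinearOrder Γ]
    {n : ℕ} {w : Fin n → Γ} {f : MvPolynomial (Fin n) K}
    (hf : ((0 : Γ) : WithBot Γ) < wdeg w f) :
    Transcendental K f := fun halg => by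
  obtain ⟨c, rfl⟩ := exists_eq_C_of_isAlgebraic halg
  exact (wdeg_C_le_zero w c).not_gt hf

theorem fracSub_adjoin {K : Type*} [Field K] {n : ℕ} (s : Set (MvPolynomial (Fin n) K)) :
    fracSub (Algebra.adjoin K s) = (IntermediateField.adjoin K
      (algebraMap (MvPolynomial (Fin n) K) (FractionRing (MvPolynomial (Fin n) K)) '' s)
      ).toSubfield := by
  apply le_antisymm
  · rw [fracSub, Subfield.closure_le]
    rintro _ ⟨q, hq, rfl⟩
    exact IntermediateField.algebra_adjoin_le_adjoin K _
      (Algebra.adjoin_image K (IsScalarTower.toAlgHom K (MvPolynomial (Fin n) K)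
        (FractionRing (MvPolynomial (Fin n) K))) s ▸ Subalgebra.mem_map.2 ⟨q, hq, rfl⟩)
  · rw [IntermediateField.adjoin_toSubfield, Subfield.closure_le, fracSub]
    refine Set.union_subset ?_
      ((Set.image_mono Algebra.subset_adjoin).trans Subfield.subset_closure)
    rintro _ ⟨c, rfl⟩
    exact Subfield.subset_closure
      ⟨_, Subalgebra.algebraMap_mem _ c, (IsScalarTower.algebraMap_apply ..).symm⟩

theorem stmt11_general (w : Fin n → Γ) (f g : MvPolynomial (Fin n) k)
    (hdf : ((0 : Γ) : WithBot Γ) < wdeg w f) (hdg : ((0 : Γ) : WithBot Γ) < wdeg w g)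
    (l m : ℕ) (hl : 0 < l) (hco : Nat.Coprime l m)
    (α : k) (hrel : g ^ l = MvPolynomial.C α * f ^ m) :
    Module.finrank (fracSub (Algebra.adjoin k ({f} : Set (MvPolynomial (Fin n) k))))
      (IntermediateField.adjoin
        (fracSub (Algebra.adjoin k ({f} : Set (MvPolynomial (Fin n) k))))
        {algebraMap (MvPolynomial (Fin n) k) (FractionRing (MvPolynomial (Fin n) k)) g})
      = l := by
  set φ := algebraMap (MvPolynomial (Fin n) k) (FractionRing (MvPolynomial (Fin n) k))
  have hφ : Function.Injective φ := IsFractionRing.injective _ _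
  have hf : Transcendental k (φ f) :=
    (transcendental_algebraMap_iff hφ).2 (transcendental_of_wdeg_pos hdf)
  have hg : φ g ≠ 0 := by
    rw [map_ne_zero_iff φ hφ]
    rintro rfl
    exact transcendental_of_wdeg_pos hdg isAlgebraic_zero
  have hrel' : φ g ^ l = algebraMap k _ α * φ f ^ m := by
    simpa [IsScalarTower.algebraMap_apply k (MvPolynomial (Fin n) k)] using congrArg φ hrel
  rw [fracSub_adjoin, Set.image_singleton]
  exact IntermediateField.finrank_adjoin_of_pow_eq_C_mul_pow hf hg hl hco hrel'

/-- If `f, g` are `w`-homogeneous of positive `w`-degree, `l, m` are coprime natural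
numbers and `α ∈ k` satisfies `g^l = α f^m`, then `[k(f)(g) : k(f)] = l`. -/
theorem stmt11 (w : Fin n → Γ) (f g : MvPolynomial (Fin n) k)
    (hf : IsWHom w f) (hg : IsWHom w g)
    (hdf : ((0 : Γ) : WithBot Γ) < wdeg w f) (hdg : ((0 : Γ) : WithBot Γ) < wdeg w g)
    (l m : ℕ) (hl : 0 < l) (hm : 0 < m) (hco : Nat.Coprime l m)
    (α : k) (hrel : g ^ l = MvPolynomial.C α * f ^ m) :
    Module.finrank (fracSub (Algebra.adjoin k ({f} : Set (MvPolynomial (Fin n) k))))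
      (IntermediateField.adjoin
        (fracSub (Algebra.adjoin k ({f} : Set (MvPolynomial (Fin n) k))))
        {algebraMap (MvPolynomial (Fin n) k) (FractionRing (MvPolynomial (Fin n) k)) g})
      = l :=
  stmt11_general w f g hdf hdg l m hl hco α hrel
end
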